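/- arXiv:2005.12451 — 5 statements merged into one kernel-verified Lean document; each statement's English description precedes it below -/
import Mathlib

section
/- Let Θ ∈ (l₀(ℤ^d))^{r×r}. If Θ is not strongly invertible, then there exists ξ₀ ∈ ℂ^d with det(\widehat{Θ}(ξ₀)) = 0, and consequently there exists a nonzero sequence u ∈ (l(ℤ^d))^{1×r} (built from the exponential sequence v(k) = e^{ik·ξ₀}) such that u * Θ = 0; hence the convolution operator C_Θ is not injective. -/
open scoped BigOperators Classical
open Complex Matrix

noncomputable section

abbrev Zd (d : ℕ) := Fin d → ℤ
abbrev Rd (d : ℕ) := Fin d → ℝ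

/-- real dot product `k·ξ` of an integer vector with a real vector -/
def dotZR {d : ℕ} (k : Zd d) (ξ : Rd d) : ℝ := ∑ j, (k j : ℝ) * ξ j

/-- complex dot product of an integer vector with a complex vector -/
def dotZC {d : ℕ} (k : Zd d) (ξ : Fin d → ℂ) : ℂ := ∑ j, (k j : ℂ) * ξ j

/-- the symbol (Fourier series) `û(ξ) = Σ_k u(k) e^{-ik·ξ}` of a finitely supported
matrix-valued filter -/
def symbol {d r s : ℕ} (u : Zd d →₀ Matrix (Fin r) (Fin s) ℂ) (ξ : Rd d) :
    Matrix (Fin r) (Fin s) ℂ :=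
  u.sum fun k A => Complex.exp (-(Complex.I * (dotZR k ξ : ℂ))) • A

/-- the symbol evaluated at a complex frequency `ξ ∈ ℂ^d` -/
def symbolC {d r s : ℕ} (u : Zd d →₀ Matrix (Fin r) (Fin s) ℂ) (ξ : Fin d → ℂ) :
    Matrix (Fin r) (Fin s) ℂ :=
  u.sum fun k A => Complex.exp (-(Complex.I * dotZC k ξ)) • A

/-- symbol of a scalar filter -/
def symbolS {d : ℕ} (u : Zd d →₀ ℂ) (ξ : Rd d) : ℂ :=
  u.sum fun k c => Complex.exp (-(Complex.I * (dotZR k ξ : ℂ))) * c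

/-- a filter is strongly invertible if the inverse of its symbol is again a matrix of
`2πℤ^d`-periodic trigonometric polynomials -/
def StronglyInvertible {d r : ℕ} (u : Zd d →₀ Matrix (Fin r) (Fin r) ℂ) : Prop :=
  ∃ v : Zd d →₀ Matrix (Fin r) (Fin r) ℂ,
    ∀ ξ : Rd d, symbol u ξ * symbol v ξ = 1 ∧ symbol v ξ * symbol u ξ = 1

/-- convolution `[v * u](n) = Σ_k v(k) u(n-k)` of an arbitrary (row-vector valued)
sequence with a finitely supported matrix filter -/
def convSeq {d r s : ℕ} (v : Zd d → Matrix (Fin 1) (Fin r) ℂ)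
    (u : Zd d →₀ Matrix (Fin r) (Fin s) ℂ) : Zd d → Matrix (Fin 1) (Fin s) ℂ :=
  fun n => u.sum fun k A => v (n - k) * A

/-- `f(ξ) = O(‖ξ‖^m)` as `ξ → 0`: all partial derivatives of total order `< m`
vanish at the origin -/
def vanishesTo {d : ℕ} (m : ℕ) (f : Rd d → ℂ) : Prop :=
  ∀ j, j < m → iteratedFDeriv ℝ j f 0 = 0

/-- `M^T ξ` for an integer matrix `M` and a real vector `ξ` -/
def mulVecT {d : ℕ} (M : Matrix (Fin d) (Fin d) ℤ) (ξ : Rd d) : Rd d :=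
  fun i => ∑ j, (M j i : ℝ) * ξ j

/-- `M k` for an integer matrix `M` and an integer vector `k` -/
def mulVecZ {d : ℕ} (M : Matrix (Fin d) (Fin d) ℤ) (k : Zd d) : Zd d :=
  fun i => ∑ j, M i j * k j

/-- `Ω_M := (M^{-T} ℤ^d) ∩ [0,1)^d` -/
def OmegaSet {d : ℕ} (M : Matrix (Fin d) (Fin d) ℤ) : Set (Rd d) :=
  {ω | (∀ i, ∃ z : ℤ, mulVecT M ω i = (z : ℝ)) ∧ ∀ i, 0 ≤ ω i ∧ ω i < 1}

/-- a dilation matrix: an integer matrix all of whose (complex) eigenvalues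
are greater than one in modulus -/
def IsDilation {d : ℕ} (M : Matrix (Fin d) (Fin d) ℤ) : Prop :=
  ∀ μ ∈ spectrum ℂ (M.map fun z => (z : ℂ)), 1 < ‖μ‖

/-- `a` has order `m` sum rules with respect to `M` with matching filter `vgu` -/
def HasSumRules {d r : ℕ} (M : Matrix (Fin d) (Fin d) ℤ) (m : ℕ)
    (a : Zd d →₀ Matrix (Fin r) (Fin r) ℂ)
    (vgu : Zd d →₀ Matrix (Fin 1) (Fin r) ℂ) : Prop :=
  symbol vgu 0 ≠ 0 ∧
  ∀ ω ∈ OmegaSet M, ∀ i : Fin r,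
    vanishesTo m (fun ξ =>
      (symbol vgu (mulVecT M ξ) * symbol a (ξ + (2 * Real.pi) • ω)) 0 i -
      (if ω = (0 : Rd d) then 1 else 0) * (symbol vgu ξ) 0 i)

/-- the symbol of the `γ`-coset sequence `u^{[γ;M]}(k) = u(γ + Mk)` -/
def cosetSymbol {d r s : ℕ} (M : Matrix (Fin d) (Fin d) ℤ)
    (u : Zd d → Matrix (Fin r) (Fin s) ℂ) (γ : Zd d) (ξ : Rd d) :
    Matrix (Fin r) (Fin s) ℂ :=
  ∑ᶠ p : Zd d, Complex.exp (-(Complex.I * (dotZR p ξ : ℂ))) • u (γ + mulVecZ M p)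

/-- scalar version of the coset symbol -/
def cosetSymbolF {d : ℕ} (N : Matrix (Fin d) (Fin d) ℤ) (u : Zd d → ℂ) (γ : Zd d)
    (ξ : Rd d) : ℂ :=
  ∑ᶠ p : Zd d, Complex.exp (-(Complex.I * (dotZR p ξ : ℂ))) * u (γ + mulVecZ N p)

/-- subdivision operator `S_{u,M} w = |det M|^{1/2} (w↑M) * u` -/
def sdOp {d p q : ℕ} (M : Matrix (Fin d) (Fin d) ℤ) (u : Zd d →₀ Matrix (Fin p) (Fin q) ℂ)
    (w : Zd d → Matrix (Fin 1) (Fin p) ℂ) : Zd d → Matrix (Fin 1) (Fin q) ℂ :=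
  fun n => (Real.sqrt (M.det.natAbs) : ℂ) • ∑ᶠ k : Zd d, w k * u (n - mulVecZ M k)

/-- transition operator `T_{u,M} v = |det M|^{1/2} (v * u^*)(M·)` -/
def tzOp {d p q : ℕ} (M : Matrix (Fin d) (Fin d) ℤ) (u : Zd d →₀ Matrix (Fin p) (Fin q) ℂ)
    (v : Zd d → Matrix (Fin 1) (Fin q) ℂ) : Zd d → Matrix (Fin 1) (Fin p) ℂ :=
  fun n => (Real.sqrt (M.det.natAbs) : ℂ) • ∑ᶠ k : Zd d, v k * (u (k - mulVecZ M n))ᴴ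

/-- a polynomial sequence of (total) degree at most `m` -/
def IsPolySeq {d : ℕ} (m : ℕ) (p : Zd d → ℂ) : Prop :=
  ∃ P : MvPolynomial (Fin d) ℂ, P.totalDegree ≤ m ∧
    ∀ k : Zd d, p k = MvPolynomial.eval (fun j => (k j : ℂ)) P

/-- a polynomial sequence of (total) degree less than `m` -/
def IsPolySeqLt {d : ℕ} (m : ℕ) (p : Zd d → ℂ) : Prop :=
  ∃ P : MvPolynomial (Fin d) ℂ, P.totalDegree < m ∧
    ∀ k : Zd d, p k = MvPolynomial.eval (fun j => (k j : ℂ)) P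

/-- convolution `p * y` of a (scalar) polynomial sequence with a finitely supported
row-vector filter -/
def polyConv {d r : ℕ} (p : Zd d → ℂ) (y : Zd d →₀ Matrix (Fin 1) (Fin r) ℂ) :
    Zd d → Matrix (Fin 1) (Fin r) ℂ :=
  fun n => y.sum fun j A => p (n - j) • A

/-- the standard vector conversion operator `E_N` associated with `N` and the coset
representatives `s` -/
def ENop {d r : ℕ} (N : Matrix (Fin d) (Fin d) ℤ) (s : Fin r → Zd d)
    (v : Zd d → ℂ) : Zd d → Matrix (Fin 1) (Fin r) ℂ :=
  fun k => Matrix.of fun _ j => v (mulVecZ N k + s j)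

/-- the row vector `Υ_N(ξ) = (e^{i N^{-1} s_1 · ξ}, …, e^{i N^{-1} s_r · ξ})` -/
def UpsN {d r : ℕ} (N : Matrix (Fin d) (Fin d) ℤ) (s : Fin r → Zd d) (ξ : Rd d) :
    Matrix (Fin 1) (Fin r) ℂ :=
  Matrix.of fun _ j => Complex.exp (Complex.I *
    ((∑ t, ((N.map fun z => (z : ℝ))⁻¹.mulVec fun i => (s j i : ℝ)) t * ξ t : ℝ) : ℂ))

/-- the sequence `∇^β δ`, whose symbol is `Π_j (1 - e^{-iξ_j})^{β_j}` -/
def nablaDelta {d : ℕ} (β : Fin d → ℕ) : Zd d → ℂ :=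
  fun k => ∏ j, if 0 ≤ k j then ((-1 : ℂ) ^ (k j).toNat * ((β j).choose (k j).toNat : ℂ)) else 0

/-- the matrix `F_{r;M}(ξ) = (e^{-i γ_l · (ξ + 2π ω_k)} I_r)_{l,k}` -/
def FMat {d r n : ℕ} (γ : Fin n → Zd d) (ω : Fin n → Rd d) (ξ : Rd d) :
    Matrix (Fin n × Fin r) (Fin n × Fin r) ℂ :=
  Matrix.of fun li kj =>
    if li.2 = kj.2 then
      Complex.exp (-(Complex.I * (dotZR (γ li.1) (ξ + (2 * Real.pi) • ω kj.1) : ℂ)))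
    else 0

/-- the matrix `D_{u,ω;M}(ξ)` whose `(l,k)`-th `r×r` block is `û(ξ+2πω)` when
`ω_l + ω - ω_k ∈ ℤ^d` and `0` otherwise -/
def DMat {d r n : ℕ} (u : Zd d →₀ Matrix (Fin r) (Fin r) ℂ) (ω : Fin n → Rd d)
    (ωv : Rd d) (ξ : Rd d) : Matrix (Fin n × Fin r) (Fin n × Fin r) ℂ :=
  Matrix.of fun li kj =>
    if ∀ i, ∃ z : ℤ, (ω li.1 + ωv - ω kj.1) i = (z : ℝ) then
      symbol u (ξ + (2 * Real.pi) • ωv) li.2 kj.2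
    else 0

/-- the matrix `E_{u,ω;M}(ξ)` whose `(l,k)`-th block is `û^{[γ_k-γ_l;M]}(ξ) e^{-iγ_k·(2πω)}` -/
def EMat {d r n : ℕ} (M : Matrix (Fin d) (Fin d) ℤ)
    (u : Zd d →₀ Matrix (Fin r) (Fin r) ℂ) (γ : Fin n → Zd d)
    (ωv : Rd d) (ξ : Rd d) : Matrix (Fin n × Fin r) (Fin n × Fin r) ℂ :=
  Matrix.of fun li kj =>
    (Complex.exp (-(Complex.I * (dotZR (γ kj.1) ((2 * Real.pi) • ωv) : ℂ))) •
      cosetSymbol M (fun k => u k) (γ kj.1 - γ li.1) ξ) li.2 kj.2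

/-- the matrix `P_{u;M}(ξ) = [û(ξ+2πω_1), …, û(ξ+2πω_{d_M})]` -/
def PMat {d r sc n : ℕ} (u : Zd d →₀ Matrix (Fin sc) (Fin r) ℂ) (ω : Fin n → Rd d)
    (ξ : Rd d) : Matrix (Fin sc) (Fin n × Fin r) ℂ :=
  Matrix.of fun i kj => symbol u (ξ + (2 * Real.pi) • ω kj.1) i kj.2

/-- the matrix `Q_{u;M}(ξ) = [û^{[γ_1;M]}(ξ), …, û^{[γ_{d_M};M]}(ξ)]` -/
def QMat {d r sc n : ℕ} (M : Matrix (Fin d) (Fin d) ℤ)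
    (u : Zd d →₀ Matrix (Fin sc) (Fin r) ℂ) (γ : Fin n → Zd d)
    (ξ : Rd d) : Matrix (Fin sc) (Fin n × Fin r) ℂ :=
  Matrix.of fun i kj => cosetSymbol M (fun k => u k) (γ kj.1) ξ i kj.2

/-- `j`-fold application of the transition operator with low-pass filter `a`:
the low-pass framelet coefficients `v_j` -/
def tzIter {d r : ℕ} (M : Matrix (Fin d) (Fin d) ℤ)
    (a : Zd d →₀ Matrix (Fin r) (Fin r) ℂ)
    (v0 : Zd d → Matrix (Fin 1) (Fin r) ℂ) : ℕ → Zd d → Matrix (Fin 1) (Fin r) ℂ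
  | 0 => v0
  | j + 1 => tzOp M a (tzIter M a v0 j)

/-- reconstruction: `reconIter … J i = ṽ_{J-i}` for the `J`-level discrete framelet
transform with filter bank `({a;b},{atil;btil})_Θ` applied to input `v0` -/
def reconIter {d r sc : ℕ} (M : Matrix (Fin d) (Fin d) ℤ)
    (a : Zd d →₀ Matrix (Fin r) (Fin r) ℂ) (b : Zd d →₀ Matrix (Fin sc) (Fin r) ℂ)
    (atil : Zd d →₀ Matrix (Fin r) (Fin r) ℂ) (btil : Zd d →₀ Matrix (Fin sc) (Fin r) ℂ)
    (Θ : Zd d →₀ Matrix (Fin r) (Fin r) ℂ)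
    (v0 : Zd d → Matrix (Fin 1) (Fin r) ℂ) (J : ℕ) : ℕ → Zd d → Matrix (Fin 1) (Fin r) ℂ
  | 0 => convSeq (tzIter M a v0 J) Θ
  | i + 1 => fun n =>
      sdOp M atil (reconIter M a b atil btil Θ v0 J i) n +
      sdOp M btil (tzOp M b (tzIter M a v0 (J - i - 1))) n

/-- the `J`-level discrete framelet transform has the perfect reconstruction property:
every input `v0` is exactly and uniquely recovered via the deconvolution `x * Θ = ṽ_0` -/
def PerfectReconstruction {d r sc : ℕ} (M : Matrix (Fin d) (Fin d) ℤ)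
    (a : Zd d →₀ Matrix (Fin r) (Fin r) ℂ) (b : Zd d →₀ Matrix (Fin sc) (Fin r) ℂ)
    (atil : Zd d →₀ Matrix (Fin r) (Fin r) ℂ) (btil : Zd d →₀ Matrix (Fin sc) (Fin r) ℂ)
    (Θ : Zd d →₀ Matrix (Fin r) (Fin r) ℂ) (J : ℕ) : Prop :=
  ∀ v0 : Zd d → Matrix (Fin 1) (Fin r) ℂ,
    convSeq v0 Θ = reconIter M a b atil btil Θ v0 J J ∧
    ∀ x, convSeq x Θ = reconIter M a b atil btil Θ v0 J J → x = v0

/-! If `det Θ̂(ξ) ≠ 0` for every `ξ ∈ ℂ^d`, then the Laurent polynomial `det Θ̂` has no zeros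
on the torus `(ℂ^×)^d`. After multiplication by a monomial it is a polynomial, which by the
Nullstellensatz divides a power of `z₁ ⋯ z_d`; so `det Θ̂` is a unit among Laurent polynomials
and `Θ̂⁻¹` is again the symbol of a finitely supported filter. Hence a filter that is not
strongly invertible has a zero `ξ₀ ∈ ℂ^d` of `det Θ̂`, and for a nonzero row vector `w` with
`w Θ̂(ξ₀) = 0` the exponential sequence `u(k) = e^{ik·ξ₀} w` satisfies
`(u * Θ)(n) = e^{in·ξ₀} w Θ̂(ξ₀) = 0`. -/

section Laurent

variable {d r s : ℕ}

lemma dotZC_add (a b : Zd d) (ξ : Fin d → ℂ) : dotZC (a + b) ξ = dotZC a ξ + dotZC b ξ := by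
  simp only [dotZC, Pi.add_apply, Int.cast_add, add_mul, Finset.sum_add_distrib]

lemma dotZC_sub (a b : Zd d) (ξ : Fin d → ℂ) : dotZC (a - b) ξ = dotZC a ξ - dotZC b ξ := by
  simp only [dotZC, Pi.sub_apply, Int.cast_sub, sub_mul, Finset.sum_sub_distrib]

@[simp]
lemma dotZC_zero (ξ : Fin d → ℂ) : dotZC (0 : Zd d) ξ = 0 := by
  simp [dotZC]

lemma symbol_eq_symbolC (u : Zd d →₀ Matrix (Fin r) (Fin s) ℂ) (ξ : Rd d) :
    symbol u ξ = symbolC u fun j => (ξ j : ℂ) := by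
  simp [symbol, symbolC, dotZR, dotZC]

lemma exists_exp_neg_I_mul_eq {z : ℂ} (hz : z ≠ 0) : ∃ w : ℂ, exp (-(I * w)) = z :=
  ⟨I * log z, by rw [← mul_assoc, I_mul_I, neg_one_mul, neg_neg, exp_log hz]⟩

/-- Laurent polynomials in `d` variables, with `single k c` standing for `c z^k`. -/
abbrev LaurentPoly (d : ℕ) := AddMonoidAlgebra ℂ (Zd d)

def expChar (ξ : Fin d → ℂ) : Multiplicative (Zd d) →* ℂ where
  toFun k := exp (-(I * dotZC k.toAdd ξ))
  map_one' := by simp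
  map_mul' a b := by rw [toAdd_mul, dotZC_add, ← exp_add]; ring_nf

/-- Evaluation at `z = e^{-iξ}`. -/
def laurentEval (ξ : Fin d → ℂ) : LaurentPoly d →ₐ[ℂ] ℂ :=
  AddMonoidAlgebra.lift ℂ ℂ (Zd d) (expChar ξ)

lemma laurentEval_apply (ξ : Fin d → ℂ) (x : LaurentPoly d) :
    laurentEval ξ x = x.coeff.sum fun k c => exp (-(I * dotZC k ξ)) * c := by
  simp [laurentEval, AddMonoidAlgebra.lift_apply, expChar, mul_comm]

@[simp]
lemma laurentEval_single (ξ : Fin d → ℂ) (k : Zd d) (c : ℂ) :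
    laurentEval ξ (AddMonoidAlgebra.single k c) = exp (-(I * dotZC k ξ)) * c := by
  simp [laurentEval, expChar, mul_comm]

lemma isUnit_single_one (k : Zd d) : IsUnit (AddMonoidAlgebra.single k (1 : ℂ)) :=
  .of_mul_eq_one (AddMonoidAlgebra.single (-k) 1) (by simp [AddMonoidAlgebra.one_def])

end Laurent

section Poly

variable {d : ℕ}

open MvPolynomial

def natExponents (d : ℕ) : (Fin d →₀ ℕ) →+ Zd d where
  toFun μ j := μ j
  map_zero' := by ext; simp
  map_add' μ ν := by ext; simp

def polyToLaurent : MvPolynomial (Fin d) ℂ →ₐ[ℂ] LaurentPoly d :=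
  AddMonoidAlgebra.mapDomainAlgHom ℂ ℂ (natExponents d)

lemma polyToLaurent_monomial (μ : Fin d →₀ ℕ) (c : ℂ) :
    polyToLaurent (monomial μ c) = AddMonoidAlgebra.single (fun j => (μ j : ℤ)) c :=
  AddMonoidAlgebra.mapDomain_single

lemma laurentEval_polyToLaurent (ξ : Fin d → ℂ) (P : MvPolynomial (Fin d) ℂ) :
    laurentEval ξ (polyToLaurent P) = eval (fun j => exp (-(I * ξ j))) P := by
  have hcomp : (laurentEval ξ).comp polyToLaurent = aeval fun j => exp (-(I * ξ j)) :=
    MvPolynomial.algHom_ext fun i => by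
      rw [AlgHom.comp_apply, aeval_X, X, polyToLaurent_monomial, laurentEval_single, mul_one]
      congr 3
      simp [dotZC, Finsupp.single_apply]
  rw [← coe_aeval_eq_eval, ← hcomp]
  rfl

lemma single_mem_range_polyToLaurent {k : Zd d} (hk : 0 ≤ k) (c : ℂ) :
    AddMonoidAlgebra.single k c ∈ (polyToLaurent (d := d)).range := by
  refine (AlgHom.mem_range _).mpr ⟨monomial (Finsupp.equivFunOnFinite.symm fun j => (k j).toNat) c, ?_⟩
  rw [polyToLaurent_monomial]
  congr
  funext j
  simpa using hk j

lemma exists_single_mul_mem_range_polyToLaurent (x : LaurentPoly d) :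
    ∃ κ : Zd d, 0 ≤ κ ∧ AddMonoidAlgebra.single κ 1 * x ∈ (polyToLaurent (d := d)).range := by
  induction x using AddMonoidAlgebra.induction_linear with
  | zero => exact ⟨0, le_rfl, by simp⟩
  | add x y hx hy =>
    obtain ⟨κ, hκ, hκx⟩ := hx
    obtain ⟨η, hη, hηy⟩ := hy
    refine ⟨κ + η, add_nonneg hκ hη, ?_⟩
    have split : AddMonoidAlgebra.single (κ + η) (1 : ℂ) * (x + y) =
        AddMonoidAlgebra.single η 1 * (AddMonoidAlgebra.single κ 1 * x) +
          AddMonoidAlgebra.single κ 1 * (AddMonoidAlgebra.single η 1 * y) := by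
      simp only [← mul_assoc, AddMonoidAlgebra.single_mul_single, mul_add, one_mul, add_comm η]
    rw [split]
    exact add_mem (mul_mem (single_mem_range_polyToLaurent hη 1) hκx)
      (mul_mem (single_mem_range_polyToLaurent hκ 1) hηy)
  | single k c =>
    refine ⟨fun j => (-k j).toNat, fun j => by simp, ?_⟩
    rw [AddMonoidAlgebra.single_mul_single, one_mul]
    exact single_mem_range_polyToLaurent (fun j => by simp; omega) c

/-- A polynomial without zeros on the torus `(ℂ^×)^d` divides a power of `X₁ ⋯ X_d`
(Nullstellensatz), so it becomes invertible among Laurent polynomials. -/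
lemma isUnit_polyToLaurent_of_eval_ne_zero (P : MvPolynomial (Fin d) ℂ)
    (hP : ∀ z : Fin d → ℂ, (∀ j, z j ≠ 0) → eval z P ≠ 0) : IsUnit (polyToLaurent P) := by
  have hmem : ∏ j, X j ∈ vanishingIdeal ℂ (zeroLocus ℂ (Ideal.span {P})) := by
    refine mem_vanishingIdeal_iff.mpr fun z hz => ?_
    have hPz : eval z P = 0 := by
      simpa [coe_aeval_eq_eval] using (mem_zeroLocus_iff.mp hz) P (Ideal.subset_span rfl)
    by_contra hne
    refine hP z (fun j hj => hne ?_) hPz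
    simpa using Finset.prod_eq_zero (Finset.mem_univ j) hj
  rw [vanishingIdeal_zeroLocus_eq_radical] at hmem
  obtain ⟨m, hm⟩ := hmem
  refine isUnit_of_dvd_unit (map_dvd polyToLaurent (Ideal.mem_span_singleton.mp hm)) ?_
  rw [map_pow, map_prod]
  exact (IsUnit.prod_univ_iff.mpr fun j => by
    rw [X, polyToLaurent_monomial]; exact isUnit_single_one _).pow m

theorem isUnit_of_laurentEval_ne_zero (x : LaurentPoly d) (hx : ∀ ξ, laurentEval ξ x ≠ 0) :
    IsUnit x := by
  obtain ⟨κ, -, hκ⟩ := exists_single_mul_mem_range_polyToLaurent x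
  obtain ⟨P, hP⟩ := (AlgHom.mem_range _).mp hκ
  have hunit : IsUnit (polyToLaurent P) := by
    refine isUnit_polyToLaurent_of_eval_ne_zero P fun z hz => ?_
    choose ξ hξ using fun j => exists_exp_neg_I_mul_eq (hz j)
    rw [← funext hξ, ← laurentEval_polyToLaurent, hP, map_mul, laurentEval_single]
    exact mul_ne_zero (mul_ne_zero (exp_ne_zero _) one_ne_zero) (hx ξ)
  rw [hP] at hunit
  exact isUnit_of_mul_isUnit_right hunit

end Poly

section Filters

variable {d r s : ℕ}

def toLaurentMatrix (u : Zd d →₀ Matrix (Fin r) (Fin s) ℂ) :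
    Matrix (Fin r) (Fin s) (LaurentPoly d) :=
  Matrix.of fun i j => u.sum fun k A => AddMonoidAlgebra.single k (A i j)

lemma symbolC_apply (u : Zd d →₀ Matrix (Fin r) (Fin s) ℂ) (ξ : Fin d → ℂ) (i : Fin r)
    (j : Fin s) : symbolC u ξ i j = u.sum fun k A => exp (-(I * dotZC k ξ)) * A i j := by
  simp [symbolC, Finsupp.sum, Matrix.sum_apply]

lemma map_laurentEval_toLaurentMatrix (u : Zd d →₀ Matrix (Fin r) (Fin s) ℂ)
    (ξ : Fin d → ℂ) : (toLaurentMatrix u).map (laurentEval ξ) = symbolC u ξ := by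
  ext i j
  simp [toLaurentMatrix, map_finsuppSum, symbolC_apply]

def ofLaurentMatrix (V : Matrix (Fin r) (Fin s) (LaurentPoly d)) :
    Zd d →₀ Matrix (Fin r) (Fin s) ℂ :=
  Finsupp.onFinset (Finset.univ.biUnion fun p : Fin r × Fin s => (V p.1 p.2).coeff.support)
    (fun k => Matrix.of fun i j => (V i j).coeff k) fun k hk => by
      obtain ⟨i, j, hij⟩ : ∃ i j, (V i j).coeff k ≠ 0 := by
        by_contra! h
        exact hk (Matrix.ext h)
      exact Finset.mem_biUnion.mpr ⟨(i, j), Finset.mem_univ _, Finsupp.mem_support_iff.mpr hij⟩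

lemma symbolC_ofLaurentMatrix (V : Matrix (Fin r) (Fin s) (LaurentPoly d)) (ξ : Fin d → ℂ) :
    symbolC (ofLaurentMatrix V) ξ = V.map (laurentEval ξ) := by
  ext i j
  let S := Finset.univ.biUnion fun p : Fin r × Fin s => (V p.1 p.2).coeff.support
  have hij : (V i j).coeff.support ⊆ S :=
    fun k hk => Finset.mem_biUnion.mpr ⟨(i, j), Finset.mem_univ _, hk⟩
  rw [symbolC_apply, Matrix.map_apply, laurentEval_apply,
    Finsupp.sum_of_support_subset (ofLaurentMatrix V) Finsupp.support_onFinset_subset _ (by simp),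
    Finsupp.sum_of_support_subset _ hij _ (by simp)]
  rfl

theorem stronglyInvertible_of_det_symbolC_ne_zero (Θ : Zd d →₀ Matrix (Fin r) (Fin r) ℂ)
    (hΘ : ∀ ξ, (symbolC Θ ξ).det ≠ 0) : StronglyInvertible Θ := by
  set T := toLaurentMatrix Θ
  have hT : IsUnit T.det := isUnit_of_laurentEval_ne_zero _ fun ξ => by
    rw [AlgHom.map_det, AlgHom.mapMatrix_apply, map_laurentEval_toLaurentMatrix]
    exact hΘ ξ
  have hsymb : ∀ ξ, symbolC Θ ξ * symbolC (ofLaurentMatrix T⁻¹) ξ = 1 ∧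
      symbolC (ofLaurentMatrix T⁻¹) ξ * symbolC Θ ξ = 1 := fun ξ => by
    rw [symbolC_ofLaurentMatrix, ← map_laurentEval_toLaurentMatrix, ← Matrix.map_mul,
      ← Matrix.map_mul, T.mul_nonsing_inv hT, T.nonsing_inv_mul hT]
    exact ⟨Matrix.map_one _ (map_zero _) (map_one _), Matrix.map_one _ (map_zero _) (map_one _)⟩
  exact ⟨ofLaurentMatrix T⁻¹, fun ξ => by simpa only [symbol_eq_symbolC] using hsymb _⟩

lemma exists_det_symbolC_eq_zero {Θ : Zd d →₀ Matrix (Fin r) (Fin r) ℂ}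
    (h : ¬ StronglyInvertible Θ) : ∃ ξ, (symbolC Θ ξ).det = 0 := by
  by_contra! hΘ
  exact h (stronglyInvertible_of_det_symbolC_ne_zero Θ hΘ)

lemma convSeq_exp_smul (Θ : Zd d →₀ Matrix (Fin r) (Fin s) ℂ) (ξ : Fin d → ℂ)
    (w : Matrix (Fin 1) (Fin r) ℂ) (n : Zd d) :
    convSeq (fun k => exp (I * dotZC k ξ) • w) Θ n = exp (I * dotZC n ξ) • (w * symbolC Θ ξ) := by
  rw [convSeq, symbolC, Finsupp.sum, Finsupp.sum, Matrix.mul_sum, Finset.smul_sum]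
  refine Finset.sum_congr rfl fun k _ => ?_
  rw [Matrix.smul_mul, Matrix.mul_smul, smul_smul, ← exp_add, dotZC_sub]
  ring_nf

end Filters

lemma Matrix.exists_row_ne_zero_mul_eq_zero {n K : Type*} [Fintype n] [DecidableEq n] [Field K]
    {M : Matrix n n K} (hM : M.det = 0) : ∃ w : Matrix (Fin 1) n K, w ≠ 0 ∧ w * M = 0 := by
  obtain ⟨v, hv, hvM⟩ := Matrix.exists_vecMul_eq_zero_iff.mpr hM
  refine ⟨Matrix.replicateRow (Fin 1) v, fun h => hv ?_, ?_⟩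
  · rwa [← Matrix.replicateRow_zero, Matrix.replicateRow_inj] at h
  · rw [← Matrix.replicateRow_vecMul, hvM, Matrix.replicateRow_zero]

/-- if `Θ` is not strongly invertible, then its symbol degenerates at some
complex frequency `ξ₀` and a nonzero sequence built from the exponential sequence
`v(k) = e^{ik·ξ₀}` is annihilated by convolution with `Θ`; hence `C_Θ` is not injective. -/
theorem stmt1 {d r : ℕ} (Θ : Zd d →₀ Matrix (Fin r) (Fin r) ℂ)
    (h : ¬ StronglyInvertible Θ) :
    ∃ ξ₀ : Fin d → ℂ, (symbolC Θ ξ₀).det = 0 ∧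
      (∃ u : Zd d → Matrix (Fin 1) (Fin r) ℂ,
        (∃ w : Matrix (Fin 1) (Fin r) ℂ, ∀ k : Zd d,
          u k = Complex.exp (Complex.I * dotZC k ξ₀) • w) ∧
        u ≠ 0 ∧ convSeq u Θ = 0) ∧
      ¬ Function.Injective (fun v : Zd d → Matrix (Fin 1) (Fin r) ℂ => convSeq v Θ) := by
  obtain ⟨ξ₀, hdet⟩ := exists_det_symbolC_eq_zero h
  obtain ⟨w, hw, hwΘ⟩ := Matrix.exists_row_ne_zero_mul_eq_zero hdet
  set u : Zd d → Matrix (Fin 1) (Fin r) ℂ := fun k => exp (I * dotZC k ξ₀) • w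
  have hu : u ≠ 0 := fun h0 => hw (by simpa [u] using congrFun h0 0)
  have hconv : convSeq u Θ = 0 := funext fun n => by
    rw [convSeq_exp_smul, hwΘ, smul_zero]
    rfl
  have hconv_zero : convSeq 0 Θ = 0 := funext fun n => by simp [convSeq]
  exact ⟨ξ₀, hdet, ⟨u, ⟨w, fun _ => rfl⟩, hu, hconv⟩,
    fun hinj => hu (hinj (hconv.trans hconv_zero.symm))⟩

end
end

section
/- For a scalar finitely supported filter v ∈ l₀(ℤ^d) and a positive integer m, one has \widehat{v}(ξ) = O(‖ξ‖^m) as ξ → 0 (i.e., all partial derivatives of \widehat{v} of total order < m vanish at 0) if and only if there exist finitely supported filters u_β ∈ l₀(ℤ^d), for all multi-indices β ∈ ℕ₀^d with |β| = m, such that \widehat{v}(ξ) = Σ_{|β|=m} (1−e^{−iξ₁})^{β₁} ⋯ (1−e^{−iξ_d})^{β_d} \widehat{u_β}(ξ). -/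
open scoped BigOperators Classical
open Complex Matrix

noncomputable section

/-
The symbol is an algebra homomorphism on the Laurent polynomial ring `ℂ[ℤ^d]` of filters, and its
derivatives of order `j` at the origin are, up to the factor `(-i)^j`, the moments
`∑ₖ v(k) k^γ` with `|γ| = j`. Multiplying a filter by `1 - zⱼ` replaces the test function by
minus its forward difference in the `j`-th coordinate, and `b`-fold differences kill `x^c` for
`c < b` and send `x^b` to `b!`. Hence `∇^β u` has vanishing moments of order `< |β|`, and its
moment `x^γ` of order `|β|` is `(-1)^|β| β! ∑ₖ u(k)` if `γ = β` and `0` otherwise. Conversely,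
by induction on `m`: if `v = ∑_{|β| = m} c_β ∇^β` also has vanishing moments of order `m`, then
every `c_β` has mass zero, so lies in the augmentation ideal `(1 - z₁, …, 1 - z_d)`, and `v` lies
in the ideal generated by the `∇^β` with `|β| = m + 1`.
-/

open scoped AddMonoidAlgebra fwdDiff

theorem fwdDiff_iter_comp_addMonoidHom {M N G : Type*} [AddCommMonoid M] [AddCommMonoid N]
    [AddCommGroup G] (φ : M →+ N) (f : N → G) (h : M) (b : ℕ) :
    (Δ_[h])^[b] (f ∘ φ) = (Δ_[φ h])^[b] f ∘ φ := by
  ext y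
  simp [fwdDiff_iter_eq_sum_shift, map_add, map_nsmul]

theorem fwdDiff_piSingle_prod {ι M R : Type*} [Fintype ι] [DecidableEq ι] [AddCommMonoid M]
    [CommRing R] (g : ι → M → R) (j : ι) (h : M) :
    Δ_[Pi.single j h] (fun n : ι → M => ∏ i, g i (n i)) =
      fun n => ∏ i, Function.update g j (Δ_[h] (g j)) i (n i) := by
  ext n
  have hshift : n + Pi.single j h = Function.update n j (n j + h) := by
    ext i; by_cases hi : i = j <;> simp [hi, Function.update_of_ne]
  simp only [fwdDiff, hshift]
  rw [Finset.prod_congr rfl fun i _ => Function.apply_update g n j (n j + h) i,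
    Finset.prod_congr rfl fun i _ => Function.apply_update (fun i (f : M → R) => f (n i)) g j
      (Δ_[h] (g j)) i,
    Finset.prod_update_of_mem (Finset.mem_univ j), Finset.prod_update_of_mem (Finset.mem_univ j),
    ← Finset.mul_prod_erase Finset.univ _ (Finset.mem_univ j), Finset.sdiff_singleton_eq_erase,
    fwdDiff]
  ring

theorem fwdDiff_piSingle_iter_prod {ι M R : Type*} [Fintype ι] [DecidableEq ι]
    [AddCommMonoid M] [CommRing R] (g : ι → M → R) (j : ι) (h : M) (b : ℕ) :
    (Δ_[Pi.single j h])^[b] (fun n : ι → M => ∏ i, g i (n i)) =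
      fun n => ∏ i, Function.update g j ((Δ_[h])^[b] (g j)) i (n i) := by
  induction b with
  | zero => simp
  | succ b ih =>
    rw [Function.iterate_succ_apply', ih, fwdDiff_piSingle_prod, Function.update_idem,
      Function.update_self, Function.iterate_succ_apply']

theorem prod_comp_eq_prod_pow_card_fiber {ι κ M : Type*} [Fintype ι] [Fintype κ]
    [DecidableEq κ] [CommMonoid M] (σ : ι → κ) (x : κ → M) :
    ∏ i, x (σ i) = ∏ t, x t ^ (Finset.univ.filter fun i => σ i = t).card := by
  rw [← Finset.prod_fiberwise Finset.univ σ]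
  refine Finset.prod_congr rfl fun t _ => ?_
  rw [Finset.prod_congr rfl fun i hi => by rw [(Finset.mem_filter.mp hi).2], Finset.prod_const]

theorem sum_card_fiber {ι κ : Type*} [Fintype ι] [Fintype κ] [DecidableEq κ] (σ : ι → κ) :
    ∑ t, (Finset.univ.filter fun i => σ i = t).card = Fintype.card ι := by
  rw [← Finset.card_eq_sum_card_fiberwise fun i _ => Finset.mem_univ (σ i), Finset.card_univ]

theorem prod_comp_finSigmaFinEquiv_symm {d : ℕ} {M : Type*} [CommMonoid M] (γ : Fin d → ℕ)
    (x : Fin d → M) : ∏ i, x ((finSigmaFinEquiv (n := γ)).symm i).1 = ∏ t, x t ^ γ t := by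
  rw [Equiv.prod_comp finSigmaFinEquiv.symm (fun p => x p.1), Fintype.prod_sigma]
  simp

theorem iteratedFDeriv_cexp_comp_clm_zero {E : Type*} [NormedAddCommGroup E] [NormedSpace ℝ E]
    (ℓ : E →L[ℝ] ℂ) (j : ℕ) (w : Fin j → E) :
    iteratedFDeriv ℝ j (fun x => Complex.exp (ℓ x)) 0 w = ∏ i, ℓ (w i) := by
  have hexp : ContDiff ℝ ⊤ Complex.exp := (Complex.contDiff_exp (𝕜 := ℂ)).restrict_scalars ℝ
  have h := ℓ.iteratedFDeriv_comp_right hexp 0 (i := j) le_top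
  rw [Function.comp_def] at h
  rw [h, ContinuousMultilinearMap.compContinuousLinearMap_apply, map_zero,
    ← (Complex.contDiff_exp (𝕜 := ℂ) (n := j)).contDiffAt.restrictScalars_iteratedFDeriv (𝕜 := ℝ)]
  simp [iteratedFDeriv_apply_eq_iteratedDeriv_mul_prod, iteratedDeriv_eq_iterate,
    Complex.iter_deriv_exp]

namespace VanishingMoments

variable {d : ℕ}

def pairing (f : Zd d → ℂ) : ℂ[Zd d] →ₗ[ℂ] ℂ :=
  Finsupp.linearCombination ℂ f ∘ₗ (AddMonoidAlgebra.coeffLinearEquiv ℂ).toLinearMap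

@[simp]
lemma pairing_single (f : Zd d → ℂ) (k : Zd d) (c : ℂ) :
    pairing f (AddMonoidAlgebra.single k c) = c * f k := by
  simp [pairing]

lemma pairing_ofCoeff (f : Zd d → ℂ) (v : Zd d →₀ ℂ) :
    pairing f (AddMonoidAlgebra.ofCoeff v) = ∑ k ∈ v.support, v k * f k := by
  simp [pairing, Finsupp.linearCombination_apply, Finsupp.sum]

lemma pairing_sub_fun (f g : Zd d → ℂ) (u : ℂ[Zd d]) :
    pairing (f - g) u = pairing f u - pairing g u := by
  induction u using AddMonoidAlgebra.induction_linear with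
  | zero => simp
  | add u w hu hw => simp only [map_add, hu, hw]; ring
  | single k c => simp [mul_sub]

lemma pairing_const_mul (c : ℂ) (f : Zd d → ℂ) (u : ℂ[Zd d]) :
    pairing (fun k => c * f k) u = c * pairing f u := by
  induction u using AddMonoidAlgebra.induction_linear with
  | zero => simp
  | add u w hu hw => simp only [map_add, hu, hw]; ring
  | single k a => simp only [pairing_single]; ring

lemma pairing_const (c : ℂ) (u : ℂ[Zd d]) :
    pairing (fun _ => c) u = c * pairing (fun _ => 1) u := by
  simpa using pairing_const_mul c (fun _ => 1) u

lemma pairing_single_mul (f : Zd d → ℂ) (a : Zd d) (u : ℂ[Zd d]) :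
    pairing f (AddMonoidAlgebra.single a 1 * u) = pairing (fun n => f (n + a)) u := by
  induction u using AddMonoidAlgebra.induction_linear with
  | zero => simp
  | add u w hu hw => simp only [mul_add, map_add, hu, hw]
  | single k c => simp [AddMonoidAlgebra.single_mul_single, add_comm]

/-- The monomial `zⱼ`, whose symbol is `e^{-iξⱼ}`. -/
def X (j : Fin d) : ℂ[Zd d] := AddMonoidAlgebra.single (Pi.single j 1) 1

/-- The filter `∇^β δ`. -/
def nabla (β : Fin d → ℕ) : ℂ[Zd d] := ∏ j, (1 - X j) ^ β j

lemma pairing_one_sub_X_mul (f : Zd d → ℂ) (j : Fin d) (u : ℂ[Zd d]) :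
    pairing f ((1 - X j) * u) = -pairing (Δ_[Pi.single j 1] f) u := by
  rw [sub_mul, one_mul, map_sub, X, pairing_single_mul, ← neg_sub, ← pairing_sub_fun]
  rfl

lemma pairing_one_sub_X_pow_mul (f : Zd d → ℂ) (j : Fin d) (b : ℕ) (u : ℂ[Zd d]) :
    pairing f ((1 - X j) ^ b * u) = (-1) ^ b * pairing ((Δ_[Pi.single j 1])^[b] f) u := by
  induction b generalizing f with
  | zero => simp
  | succ b ih =>
    rw [pow_succ', mul_assoc, pairing_one_sub_X_mul, ih, Function.iterate_succ_apply]
    ring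

lemma pairing_prod_nabla_mul (g : Fin d → ℤ → ℂ) (β : Fin d → ℕ) (u : ℂ[Zd d]) :
    pairing (fun n => ∏ j, g j (n j)) (nabla β * u) =
      (-1) ^ (∑ j, β j) * pairing (fun n => ∏ j, (Δ_[1])^[β j] (g j) (n j)) u := by
  suffices h : ∀ s : Finset (Fin d), ∀ g : Fin d → ℤ → ℂ,
      pairing (fun n => ∏ j, g j (n j)) ((∏ j ∈ s, (1 - X j) ^ β j) * u) =
        (-1) ^ (∑ j ∈ s, β j) *
          pairing (fun n => ∏ j, (if j ∈ s then (Δ_[1])^[β j] (g j) else g j) (n j)) u by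
    simpa [nabla] using h Finset.univ g
  intro s
  induction s using Finset.induction_on with
  | empty => simp
  | insert a s ha ih =>
    intro g
    rw [Finset.prod_insert ha, mul_assoc, pairing_one_sub_X_pow_mul,
      fwdDiff_piSingle_iter_prod, ih, Finset.sum_insert ha, pow_add, mul_assoc]
    have hg : ∀ j, (if j ∈ s then (Δ_[1])^[β j] (Function.update g a ((Δ_[1])^[β a] (g a)) j)
        else Function.update g a ((Δ_[1])^[β a] (g a)) j) =
          if j ∈ insert a s then (Δ_[1])^[β j] (g j) else g j := by
      intro j
      by_cases hj : j = a
      · subst hj; simp [ha]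
      · simp [hj]
    simp only [hg]

def moment (γ : Fin d → ℕ) : ℂ[Zd d] →ₗ[ℂ] ℂ := pairing fun n => ∏ j, (n j : ℂ) ^ γ j

lemma moment_nabla_mul (γ β : Fin d → ℕ) (u : ℂ[Zd d]) :
    moment γ (nabla β * u) = (-1) ^ (∑ j, β j) *
      pairing (fun n => ∏ j, (Δ_[1])^[β j] (fun r : ℂ => r ^ γ j) (n j)) u := by
  have hcast : ∀ j, (Δ_[1])^[β j] (fun n : ℤ => (n : ℂ) ^ γ j) =
      (Δ_[1])^[β j] (fun r : ℂ => r ^ γ j) ∘ Int.castAddHom ℂ := fun j =>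
    (fwdDiff_iter_comp_addMonoidHom (Int.castAddHom ℂ) (fun r : ℂ => r ^ γ j) 1 _).trans
      (by simp)
  rw [moment, pairing_prod_nabla_mul (fun j (n : ℤ) => (n : ℂ) ^ γ j)]
  simp [hcast]

lemma moment_nabla_mul_of_lt {γ β : Fin d → ℕ} {j : Fin d} (hj : γ j < β j) (u : ℂ[Zd d]) :
    moment γ (nabla β * u) = 0 := by
  have hzero : (fun n : Zd d => ∏ i, (Δ_[1])^[β i] (fun r : ℂ => r ^ γ i) (n i)) = fun _ => 0 :=
    funext fun n => Finset.prod_eq_zero (Finset.mem_univ j) (by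
      rw [fwdDiff_iter_pow_eq_zero_of_lt hj, Pi.zero_apply])
  rw [moment_nabla_mul, hzero, pairing_const, zero_mul, mul_zero]

lemma moment_nabla_mul_self (β : Fin d → ℕ) (u : ℂ[Zd d]) :
    moment β (nabla β * u) =
      (-1) ^ (∑ j, β j) * (∏ j, ((β j).factorial : ℂ)) * pairing (fun _ => 1) u := by
  simp only [moment_nabla_mul, fwdDiff_iter_eq_factorial, Pi.natCast_apply]
  rw [pairing_const, mul_assoc]

lemma exists_lt_of_sum_le_of_ne {γ β : Fin d → ℕ} (hle : ∑ j, γ j ≤ ∑ j, β j) (hne : γ ≠ β) :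
    ∃ j, γ j < β j := by
  by_contra! h
  have heq := (Finset.sum_eq_sum_iff_of_le fun j _ => h j).mp
    (le_antisymm (Finset.sum_le_sum fun j _ => h j) hle)
  exact hne (funext fun j => (heq j (Finset.mem_univ j)).symm)

lemma moment_nabla_mul_of_sum_le_of_ne {γ β : Fin d → ℕ} (hle : ∑ j, γ j ≤ ∑ j, β j)
    (hne : γ ≠ β) (u : ℂ[Zd d]) : moment γ (nabla β * u) = 0 :=
  let ⟨_, hj⟩ := exists_lt_of_sum_le_of_ne hle hne
  moment_nabla_mul_of_lt hj u

def augIdeal (d : ℕ) : Ideal ℂ[Zd d] := Ideal.span (Set.range fun j : Fin d => 1 - X j)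

lemma mk_augIdeal_single_one (k : Zd d) :
    Ideal.Quotient.mk (augIdeal d) (AddMonoidAlgebra.single k 1) = 1 := by
  let π := Ideal.Quotient.mk (augIdeal d)
  let S : AddSubgroup (Zd d) :=
    { carrier := {k | π (AddMonoidAlgebra.single k 1) = 1}
      zero_mem' := by simp [← AddMonoidAlgebra.one_def]
      add_mem' := fun {a b} ha hb => by
        simp only [Set.mem_ofPred_eq] at ha hb ⊢
        rw [← one_mul (1 : ℂ), ← AddMonoidAlgebra.single_mul_single, map_mul, ha, hb, one_mul]
      neg_mem' := fun {a} ha => by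
        simp only [Set.mem_ofPred_eq] at ha ⊢
        calc π (AddMonoidAlgebra.single (-a) 1)
            = π (AddMonoidAlgebra.single (-a) 1) * π (AddMonoidAlgebra.single a 1) := by
              rw [ha, mul_one]
          _ = 1 := by
              rw [← map_mul, AddMonoidAlgebra.single_mul_single, neg_add_cancel, one_mul,
                ← AddMonoidAlgebra.one_def, map_one] }
  have hgen : Set.range (Pi.basisFun ℤ (Fin d)) ⊆ S.toIntSubmodule := by
    rintro _ ⟨j, rfl⟩
    change π (AddMonoidAlgebra.single (Pi.basisFun ℤ (Fin d) j) 1) = 1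
    rw [Pi.basisFun_apply, ← sub_eq_zero, ← map_one π, ← map_sub,
      Ideal.Quotient.eq_zero_iff_mem, ← neg_sub]
    exact neg_mem (Ideal.subset_span ⟨j, rfl⟩)
  have htop := Submodule.span_le.mpr hgen
  rw [(Pi.basisFun ℤ (Fin d)).span_eq] at htop
  exact htop Submodule.mem_top

lemma mem_augIdeal_of_pairing_one_eq_zero {u : ℂ[Zd d]} (hu : pairing (fun _ => 1) u = 0) :
    u ∈ augIdeal d := by
  have hmk : ∀ w : ℂ[Zd d],
      Ideal.Quotient.mk (augIdeal d) w = algebraMap ℂ _ (pairing (fun _ => 1) w) := by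
    intro w
    induction w using AddMonoidAlgebra.induction_linear with
    | zero => simp
    | add w w' hw hw' => simp only [map_add, hw, hw']
    | single k c =>
      have hsingle : AddMonoidAlgebra.single k c =
          algebraMap ℂ ℂ[Zd d] c * AddMonoidAlgebra.single k 1 := by
        rw [← Algebra.smul_def, AddMonoidAlgebra.smul_single, smul_eq_mul, mul_one]
      rw [hsingle, map_mul, mk_augIdeal_single_one, mul_one, Ideal.Quotient.mk_algebraMap,
        ← hsingle, pairing_single, mul_one]
  rw [← Ideal.Quotient.eq_zero_iff_mem, hmk, hu, map_zero]

def diffIdeal (d m : ℕ) : Ideal ℂ[Zd d] :=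
  Ideal.span (Set.range fun β : Finset.Nat.antidiagonalTuple d m => nabla (β : Fin d → ℕ))

lemma nabla_add_single (β : Fin d → ℕ) (j : Fin d) :
    nabla (β + Pi.single j 1) = (1 - X j) * nabla β := by
  simp only [nabla, Pi.add_apply, pow_add, Finset.prod_mul_distrib]
  rw [mul_comm, Finset.prod_eq_single j (fun i _ hi => by simp [hi]) (by simp)]
  simp

lemma augIdeal_mul_diffIdeal_le (m : ℕ) :
    augIdeal d * diffIdeal d m ≤ diffIdeal d (m + 1) := by
  rw [augIdeal, diffIdeal, Ideal.span_mul_span', Ideal.span_le]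
  rintro _ ⟨_, ⟨j, rfl⟩, _, ⟨⟨β, hβ⟩, rfl⟩, rfl⟩
  dsimp only
  rw [← nabla_add_single]
  refine Ideal.subset_span ⟨⟨β + Pi.single j 1, ?_⟩, rfl⟩
  rw [Finset.Nat.mem_antidiagonalTuple] at hβ ⊢
  simp [Finset.sum_add_distrib, hβ]

theorem mem_diffIdeal_of_moment_eq_zero (m : ℕ) {v : ℂ[Zd d]}
    (hv : ∀ γ : Fin d → ℕ, ∑ j, γ j < m → moment γ v = 0) : v ∈ diffIdeal d m := by
  induction m generalizing v with
  | zero =>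
    have hone : (1 : ℂ[Zd d]) ∈ diffIdeal d 0 :=
      Ideal.subset_span ⟨⟨0, Finset.Nat.mem_antidiagonalTuple.mpr (by simp)⟩,
        Finset.prod_eq_one fun j _ => pow_zero _⟩
    simpa using Ideal.mul_mem_left _ v hone
  | succ m ih =>
    obtain ⟨c, rfl⟩ := Ideal.mem_span_range_iff_exists_fun.mp (ih fun γ hγ => hv γ (by omega))
    refine Ideal.sum_mem _ fun β _ => augIdeal_mul_diffIdeal_le m
      (Ideal.mul_mem_mul (mem_augIdeal_of_pairing_one_eq_zero ?_) (Ideal.subset_span ⟨β, rfl⟩))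
    have hβ : ∑ j, (β : Fin d → ℕ) j = m := Finset.Nat.mem_antidiagonalTuple.mp β.2
    -- the moment `x^β` of `∑ c_β' ∇^β'` only sees the mass of `c_β`
    have hmom := hv β (by omega)
    rw [map_sum, Finset.sum_eq_single β, mul_comm, moment_nabla_mul_self] at hmom
    · have hfac : (-1) ^ (∑ j, (β : Fin d → ℕ) j) * ∏ j, (((β : Fin d → ℕ) j).factorial : ℂ) ≠ 0 :=
        mul_ne_zero (pow_ne_zero _ (by norm_num))
          (Finset.prod_ne_zero_iff.mpr fun j _ => Nat.cast_ne_zero.mpr (Nat.factorial_ne_zero _))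
      exact (mul_eq_zero.mp hmom).resolve_left hfac
    · intro β' _ hne
      rw [mul_comm]
      have hβ' : ∑ j, (β' : Fin d → ℕ) j = m := Finset.Nat.mem_antidiagonalTuple.mp β'.2
      exact moment_nabla_mul_of_sum_le_of_ne (by omega) (fun h => hne (Subtype.ext h).symm) _
    · simp

theorem exists_eq_sum_nabla_mul_of_moment_eq_zero {m : ℕ} {v : ℂ[Zd d]}
    (hv : ∀ γ : Fin d → ℕ, ∑ j, γ j < m → moment γ v = 0) :
    ∃ c : (Fin d → ℕ) → ℂ[Zd d], v = ∑ β ∈ Finset.Nat.antidiagonalTuple d m, nabla β * c β := by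
  obtain ⟨c, hc⟩ := Ideal.mem_span_range_iff_exists_fun.mp (mem_diffIdeal_of_moment_eq_zero m hv)
  refine ⟨fun β => if hβ : β ∈ Finset.Nat.antidiagonalTuple d m then c ⟨β, hβ⟩ else 0, ?_⟩
  rw [← hc, ← Finset.sum_coe_sort (Finset.Nat.antidiagonalTuple d m)]
  dsimp only
  exact Finset.sum_congr rfl fun β _ => by rw [dif_pos β.2, mul_comm]

def character (ξ : Rd d) : Multiplicative (Zd d) →* ℂ where
  toFun k := Complex.exp (-(Complex.I * (dotZR k.toAdd ξ : ℂ)))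
  map_one' := by simp [dotZR]
  map_mul' a b := by
    rw [← Complex.exp_add]
    simp only [toAdd_mul, dotZR, Pi.add_apply, Int.cast_add, add_mul, Finset.sum_add_distrib]
    push_cast
    ring_nf

def symbolHom (ξ : Rd d) : ℂ[Zd d] →ₐ[ℂ] ℂ := AddMonoidAlgebra.lift ℂ ℂ (Zd d) (character ξ)

lemma symbolS_eq_symbolHom (u : Zd d →₀ ℂ) (ξ : Rd d) :
    symbolS u ξ = symbolHom ξ (AddMonoidAlgebra.ofCoeff u) := by
  rw [symbolHom, AddMonoidAlgebra.lift_apply, symbolS]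
  exact Finsupp.sum_congr fun k _ => mul_comm _ _

lemma symbolHom_nabla (ξ : Rd d) (β : Fin d → ℕ) :
    symbolHom ξ (nabla β) = ∏ j, (1 - Complex.exp (-(Complex.I * (ξ j : ℂ)))) ^ β j := by
  simp [nabla, X, symbolHom, character, dotZR, Pi.single_apply]

def phase (k : Zd d) : Rd d →L[ℝ] ℂ :=
  ∑ j, (-(Complex.I * k j)) • (Complex.ofRealCLM ∘L ContinuousLinearMap.proj j)

lemma phase_apply (k : Zd d) (ξ : Rd d) : phase k ξ = -(Complex.I * (dotZR k ξ : ℂ)) := by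
  simp [phase, dotZR, Finset.mul_sum, mul_assoc]

lemma phase_single (k : Zd d) (t : Fin d) : phase k (Pi.single t 1) = -Complex.I * k t := by
  simp [phase, Pi.single_apply, apply_ite]

lemma iteratedFDeriv_symbolS_zero (v : Zd d →₀ ℂ) (j : ℕ) (w : Fin j → Rd d) :
    iteratedFDeriv ℝ j (symbolS v) 0 w = pairing (fun k => ∏ i, phase k (w i))
      (AddMonoidAlgebra.ofCoeff v) := by
  have hsymb : symbolS v = fun ξ => ∑ k ∈ v.support, v k • Complex.exp (phase k ξ) := by
    ext ξ
    simp [symbolS, Finsupp.sum, phase_apply, mul_comm]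
  have hexp : ∀ k : Zd d, ContDiff ℝ j fun ξ => Complex.exp (phase k ξ) :=
    fun k => Complex.contDiff_exp.comp (phase k).contDiff
  rw [hsymb, iteratedFDeriv_sum fun k _ => (hexp k).const_smul (v k), Finset.sum_apply,
    _root_.sum_apply, pairing_ofCoeff]
  refine Finset.sum_congr rfl fun k _ => ?_
  rw [iteratedFDeriv_const_smul_apply' (hexp k).contDiffAt, _root_.smul_apply,
    iteratedFDeriv_cexp_comp_clm_zero, smul_eq_mul]

lemma iteratedFDeriv_symbolS_zero_basis (v : Zd d →₀ ℂ) {j : ℕ} (σ : Fin j → Fin d) :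
    iteratedFDeriv ℝ j (symbolS v) 0 (fun i => Pi.single (σ i) 1) =
      (-Complex.I) ^ j * pairing (fun k => ∏ i, (k (σ i) : ℂ)) (AddMonoidAlgebra.ofCoeff v) := by
  simp only [iteratedFDeriv_symbolS_zero, phase_single, Finset.prod_mul_distrib,
    Finset.prod_const, Finset.card_univ, Fintype.card_fin]
  exact pairing_const_mul _ _ _

lemma iteratedFDeriv_symbolS_zero_eq_zero_iff (v : Zd d →₀ ℂ) (j : ℕ) :
    iteratedFDeriv ℝ j (symbolS v) 0 = 0 ↔
      ∀ γ : Fin d → ℕ, ∑ t, γ t = j → moment γ (AddMonoidAlgebra.ofCoeff v) = 0 := by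
  have hI : (-Complex.I) ^ j ≠ 0 := pow_ne_zero _ (neg_ne_zero.mpr Complex.I_ne_zero)
  constructor
  · rintro h γ rfl
    have hσ := iteratedFDeriv_symbolS_zero_basis v fun i => ((finSigmaFinEquiv (n := γ)).symm i).1
    rw [h, _root_.zero_apply,
      funext fun k : Zd d => prod_comp_finSigmaFinEquiv_symm γ fun t => (k t : ℂ)] at hσ
    exact (mul_eq_zero.mp hσ.symm).resolve_left hI
  · intro h
    refine ContinuousMultilinearMap.toMultilinearMap_injective
      (Module.Basis.ext_multilinear (fun _ => Pi.basisFun ℝ (Fin d)) fun σ => ?_)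
    simp only [ContinuousMultilinearMap.coe_coe, Pi.basisFun_apply,
      iteratedFDeriv_symbolS_zero_basis]
    rw [funext fun k : Zd d => prod_comp_eq_prod_pow_card_fiber σ fun t => (k t : ℂ)]
    have hcard := sum_card_fiber σ
    rw [Fintype.card_fin] at hcard
    exact (congrArg _ (h _ hcard)).trans (mul_zero _)

theorem vanishesTo_symbolS_iff (m : ℕ) (v : Zd d →₀ ℂ) :
    vanishesTo m (symbolS v) ↔
      ∀ γ : Fin d → ℕ, ∑ t, γ t < m → moment γ (AddMonoidAlgebra.ofCoeff v) = 0 := by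
  simp only [vanishesTo, iteratedFDeriv_symbolS_zero_eq_zero_iff]
  exact ⟨fun h γ hγ => h _ hγ γ rfl, fun h j hj γ hγ => h γ (hγ ▸ hj)⟩

end VanishingMoments

open VanishingMoments

theorem stmt2_general {d : ℕ} (m : ℕ) (v : Zd d →₀ ℂ) :
    vanishesTo m (fun ξ => symbolS v ξ) ↔
      ∃ u : (Fin d → ℕ) → (Zd d →₀ ℂ),
        ∀ ξ : Rd d, symbolS v ξ =
          ∑ β ∈ Finset.Nat.antidiagonalTuple d m,
            (∏ j, (1 - Complex.exp (-(Complex.I * (ξ j : ℂ)))) ^ (β j)) * symbolS (u β) ξ := by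
  constructor
  · intro hv
    obtain ⟨c, hc⟩ := exists_eq_sum_nabla_mul_of_moment_eq_zero ((vanishesTo_symbolS_iff m v).mp hv)
    refine ⟨fun β => (c β).coeff, fun ξ => ?_⟩
    simp only [symbolS_eq_symbolHom, AddMonoidAlgebra.ofCoeff_coeff, hc, map_sum, map_mul,
      symbolHom_nabla]
  · rintro ⟨u, hu⟩
    let w := ∑ β ∈ Finset.Nat.antidiagonalTuple d m, nabla β * AddMonoidAlgebra.ofCoeff (u β)
    have hvw : symbolS v = symbolS w.coeff := funext fun ξ => by
      simp only [hu, symbolS_eq_symbolHom, AddMonoidAlgebra.ofCoeff_coeff, w, map_sum, map_mul,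
        symbolHom_nabla]
    rw [hvw, vanishesTo_symbolS_iff]
    intro γ hγ
    rw [AddMonoidAlgebra.ofCoeff_coeff, map_sum]
    refine Finset.sum_eq_zero fun β hβ => ?_
    have hβm := Finset.Nat.mem_antidiagonalTuple.mp hβ
    exact moment_nabla_mul_of_sum_le_of_ne (by omega) (by rintro rfl; omega) _

/-- a scalar filter has `m` vanishing moments at the origin iff its symbol
factors through the difference symbols `Π_j (1-e^{-iξ_j})^{β_j}`, `|β| = m`. -/
theorem stmt2 {d : ℕ} (m : ℕ) (hm : 0 < m) (v : Zd d →₀ ℂ) :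
    vanishesTo m (fun ξ => symbolS v ξ) ↔
      ∃ u : (Fin d → ℕ) → (Zd d →₀ ℂ),
        ∀ ξ : Rd d, symbolS v ξ =
          ∑ β ∈ Finset.Nat.antidiagonalTuple d m,
            (∏ j, (1 - Complex.exp (-(Complex.I * (ξ j : ℂ)))) ^ (β j)) * symbolS (u β) ξ :=
  stmt2_general m v
end
end

section
/- Let M be a d×d dilation matrix (integer matrix all of whose eigenvalues exceed 1 in modulus). Let g be a function that is infinitely differentiable at 0 and satisfies g(M^T ξ) = g(ξ) + O(‖ξ‖^m) as ξ → 0 and g(0) = 1. Then g(ξ) = 1 + O(‖ξ‖^m) as ξ → 0; that is, all partial derivatives ∂^μ g(0) vanish for 1 ≤ |μ| < m. -/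
open scoped BigOperators Classical
open Complex Matrix

noncomputable section

section StmtAux

open Filter Topology
open scoped ENNReal NNReal

attribute [local instance] Matrix.linftyOpNormedRing Matrix.linftyOpNormedAlgebra

private lemma pow_norm_tendsto_zero' {A : Type*} [NormedRing A] [NormedAlgebra ℂ A]
    [CompleteSpace A] (a : A) (h : spectralRadius ℂ a < 1) :
    Tendsto (fun n : ℕ => ‖a ^ n‖) atTop (nhds 0) := by
  obtain ⟨c, hc, hc1⟩ := exists_between h
  have hcne : c ≠ ⊤ := (hc1.trans_le le_top).ne
  lift c to NNReal using hcne
  have hc1' : c < 1 := by exact_mod_cast hc1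
  have hev : ∀ᶠ n : ℕ in atTop, (‖a ^ n‖₊ : ℝ≥0∞) ^ (1/(n:ℝ)) < (c : ℝ≥0∞) :=
    (spectrum.pow_nnnorm_pow_one_div_tendsto_nhds_spectralRadius a).eventually_lt_const hc
  have key : ∀ᶠ n : ℕ in atTop, ‖a ^ n‖ ≤ (c:ℝ) ^ n := by
    filter_upwards [hev, eventually_ge_atTop 1] with n hn hn1
    have hne : (n:ℝ) ≠ 0 := Nat.cast_ne_zero.mpr (by omega)
    have h2 : ((‖a ^ n‖₊ : ℝ≥0∞) ^ (1/(n:ℝ))) ^ (n:ℝ) ≤ (c : ℝ≥0∞) ^ (n:ℝ) :=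
      ENNReal.rpow_le_rpow hn.le (by positivity)
    rw [← ENNReal.rpow_mul, one_div, inv_mul_cancel₀ hne, ENNReal.rpow_one,
      ENNReal.rpow_natCast] at h2
    have h3 : ‖a ^ n‖₊ ≤ c ^ n := ENNReal.coe_le_coe.mp (by rwa [← ENNReal.coe_pow] at h2)
    calc ‖a ^ n‖ = ((‖a ^ n‖₊ : ℝ≥0) : ℝ) := (coe_nnnorm _).symm
      _ ≤ ((c ^ n : ℝ≥0) : ℝ) := by exact_mod_cast h3
      _ = (c:ℝ) ^ n := by push_cast; ring
  exact squeeze_zero' (Eventually.of_forall fun n => norm_nonneg _) key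
    (tendsto_pow_atTop_nhds_zero_of_lt_one c.coe_nonneg hc1')

private lemma spectrum_transpose' {d : ℕ} (A : Matrix (Fin d) (Fin d) ℂ) :
    spectrum ℂ Aᵀ = spectrum ℂ A := by
  ext μ
  have h : algebraMap ℂ (Matrix (Fin d) (Fin d) ℂ) μ - Aᵀ = (algebraMap ℂ _ μ - A)ᵀ := by
    rw [Matrix.transpose_sub]
    congr 1
    rw [Matrix.algebraMap_eq_diagonal, Matrix.diagonal_transpose]
  rw [spectrum.mem_iff, spectrum.mem_iff, h, not_iff_not,
    Matrix.isUnit_iff_isUnit_det, Matrix.det_transpose, ← Matrix.isUnit_iff_isUnit_det]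

private lemma matrix_pow_tendsto' {d : ℕ} (S : Matrix (Fin d) (Fin d) ℂ)
    (hS : ∀ μ ∈ spectrum ℂ S, 1 < ‖μ‖) :
    ∃ w : (Matrix (Fin d) (Fin d) ℂ)ˣ, (↑w : Matrix (Fin d) (Fin d) ℂ) = S ∧
      Tendsto (fun n : ℕ => ‖(↑w⁻¹ : Matrix (Fin d) (Fin d) ℂ) ^ n‖) atTop (nhds 0) := by
  have hunit : IsUnit S := by
    by_contra h0
    have := hS 0 ((spectrum.zero_mem_iff ℂ).mpr h0)
    norm_num at this
  refine ⟨hunit.unit, rfl, ?_⟩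
  have hlt : ∀ μ ∈ spectrum ℂ (↑hunit.unit⁻¹ : Matrix (Fin d) (Fin d) ℂ), ‖μ‖₊ < 1 := by
    intro μ hμ
    have hne : μ ≠ 0 := by
      intro h0
      rw [h0] at hμ
      exact ((spectrum.zero_mem_iff ℂ).mp hμ) (hunit.unit⁻¹).isUnit
    have hiff := spectrum.inv_mem_iff (r := Units.mk0 μ hne) (a := hunit.unit⁻¹)
    have hmem : (↑(Units.mk0 μ hne)⁻¹ : ℂ) ∈ spectrum ℂ (↑(hunit.unit⁻¹)⁻¹ : Matrix (Fin d) (Fin d) ℂ) :=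
      hiff.mp hμ
    rw [inv_inv] at hmem
    have h1 : 1 < ‖μ⁻¹‖ := by
      have := hS _ hmem
      simpa using this
    rw [norm_inv] at h1
    have habs : ‖μ‖ < 1 := by
      have hpos : 0 < ‖μ‖ := norm_pos_iff.mpr hne
      have h2 : ‖μ‖ * 1 < ‖μ‖ * (‖μ‖)⁻¹ :=
        mul_lt_mul_of_pos_left h1 hpos
      rw [mul_inv_cancel₀ (ne_of_gt hpos), mul_one] at h2
      exact h2
    rw [← NNReal.coe_lt_coe]
    simpa using habs
  have hsr : spectralRadius ℂ (↑hunit.unit⁻¹ : Matrix (Fin d) (Fin d) ℂ) < 1 := by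
    rcases Set.eq_empty_or_nonempty (spectrum ℂ (↑hunit.unit⁻¹ : Matrix (Fin d) (Fin d) ℂ)) with he | hne
    · rw [spectralRadius, he]
      simp
    · have := spectrum.spectralRadius_lt_of_forall_lt_of_nonempty hne (r := 1) hlt
      simpa using this
  simpa using pow_norm_tendsto_zero' _ hsr

/-- if `g` is smooth at `0`, `g(0) = 1` and `g(M^T ξ) = g(ξ) + O(‖ξ‖^m)`
for a dilation matrix `M`, then `g(ξ) = 1 + O(‖ξ‖^m)` as `ξ → 0`. -/
theorem stmt3 {d : ℕ} (M : Matrix (Fin d) (Fin d) ℤ) (hM : IsDilation M)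
    (m : ℕ) (g : Rd d → ℂ) (hg : ContDiffAt ℝ (⊤ : ℕ∞) g 0) (hg0 : g 0 = 1)
    (hinv : vanishesTo m (fun ξ => g (mulVecT M ξ) - g ξ)) :
    vanishesTo m (fun ξ => g ξ - 1) := by
  classical
  set Rm : Matrix (Fin d) (Fin d) ℝ := (M.map fun z : ℤ => (z:ℝ))ᵀ with hRm
  set S : Matrix (Fin d) (Fin d) ℂ := Rm.map fun r : ℝ => (r:ℂ) with hSdef
  have hST : S = (M.map fun z : ℤ => (z:ℂ))ᵀ := by
    ext i j
    simp [hSdef, hRm, Matrix.map_apply]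
  have hspec : ∀ μ ∈ spectrum ℂ S, 1 < ‖μ‖ := by
    intro μ hμ
    rw [hST, spectrum_transpose'] at hμ
    exact hM μ hμ
  obtain ⟨w, hw, hwt⟩ := matrix_pow_tendsto' S hspec
  have hSunit : IsUnit S := hw ▸ w.isUnit
  have hdetS : S.det ≠ 0 := ((Matrix.isUnit_iff_isUnit_det S).mp hSunit).ne_zero
  have hdetR : Rm.det ≠ 0 := by
    intro h0
    apply hdetS
    have hS2 : S = Rm.map (Complex.ofRealHom : ℝ →+* ℂ) := rfl
    rw [hS2, show Rm.map ⇑Complex.ofRealHom = Complex.ofRealHom.mapMatrix Rm from rfl,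
      ← RingHom.map_det, h0]
    simp
  have hRu : IsUnit Rm := (Matrix.isUnit_iff_isUnit_det Rm).mpr (isUnit_iff_ne_zero.mpr hdetR)
  obtain ⟨iv⟩ := hRu.nonempty_invertible
  set eL : Rd d ≃ₗ[ℝ] Rd d := Matrix.toLinearEquiv' Rm iv with heL
  set e : Rd d ≃L[ℝ] Rd d := eL.toContinuousLinearEquiv with hedef
  have he : ∀ ξ : Rd d, e ξ = mulVecT M ξ := by
    intro ξ
    have h1 : e ξ = eL ξ := rfl
    have h2 : eL ξ = Matrix.toLin' Rm ξ := by
      rw [← Matrix.toLinearEquiv'_apply Rm iv]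
      rfl
    rw [h1, h2, Matrix.toLin'_apply]
    funext i
    simp [mulVecT, Matrix.mulVec, dotProduct, hRm, Matrix.map_apply]
  have he0 : e 0 = 0 := by
    rw [he 0]
    funext i
    simp [mulVecT]
  intro j hj
  rcases Nat.eq_zero_or_pos j with hj0 | hjpos
  · subst hj0
    ext v
    simp [iteratedFDeriv_zero_apply, hg0]
  -- j ≥ 1
  obtain ⟨u', hu'mem, hgu⟩ := hg.contDiffOn (m := ((j:ℕ) : WithTop ℕ∞)) (by exact_mod_cast le_top) (by simp)
  obtain ⟨t, hts, ht, h0t⟩ := mem_nhds_iff.mp hu'mem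
  have hgt : ContDiffOn ℝ (j:ℕ) g t := (hgu.mono hts).of_le (by simp)
  set s := t ∩ (⇑e ⁻¹' t) with hsdef
  have hs : IsOpen s := ht.inter (ht.preimage e.continuous)
  have h0s : (0:Rd d) ∈ s := ⟨h0t, by simp [Set.mem_preimage, he0, h0t]⟩
  have hge : ContDiffOn ℝ (j:ℕ) (g ∘ ⇑e) s := by
    apply hgt.comp
    · exact (e : Rd d →L[ℝ] Rd d).contDiff.contDiffOn
    · exact fun x hx => hx.2
  have hgs : ContDiffOn ℝ (j:ℕ) g s := hgt.mono Set.inter_subset_left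
  set T := iteratedFDeriv ℝ j g 0 with hT
  have hTinv : T.compContinuousLinearMap (fun _ => (e : Rd d →L[ℝ] Rd d)) = T := by
    have h0 : iteratedFDeriv ℝ j (fun ξ => g (mulVecT M ξ) - g ξ) 0 = 0 := hinv j hj
    have heq : (fun ξ => g (mulVecT M ξ) - g ξ) = (fun ξ => (g ∘ ⇑e) ξ - g ξ) := by
      funext ξ
      rw [Function.comp_apply, he ξ]
    rw [heq] at h0
    have hsub : iteratedFDerivWithin ℝ j (fun ξ => (g ∘ ⇑e) ξ - g ξ) s 0
        = iteratedFDerivWithin ℝ j (g ∘ ⇑e) s 0 - iteratedFDerivWithin ℝ j g s 0 := by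
      have hadd := iteratedFDerivWithin_add_apply' (f := g ∘ ⇑e) (g := fun x => -g x)
        (hge 0 h0s) (hgs.neg 0 h0s) hs.uniqueDiffOn h0s
      have hng : (fun x : Rd d => -g x) = -g := rfl
      simp only [sub_eq_add_neg]
      rw [hadd, hng, iteratedFDerivWithin_neg_apply hs.uniqueDiffOn h0s]
    have hcomp : iteratedFDerivWithin ℝ j (g ∘ ⇑e) (⇑e ⁻¹' t) 0
        = (iteratedFDerivWithin ℝ j g t (e 0)).compContinuousLinearMap
            (fun _ => (e : Rd d →L[ℝ] Rd d)) :=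
      e.iteratedFDerivWithin_comp_right g ht.uniqueDiffOn (by rw [he0]; exact h0t) j
    have hglob_sub : iteratedFDeriv ℝ j (fun ξ => (g ∘ ⇑e) ξ - g ξ) 0 =
        iteratedFDeriv ℝ j (g ∘ ⇑e) 0 - iteratedFDeriv ℝ j g 0 := by
      rw [← iteratedFDerivWithin_of_isOpen (f := fun ξ => (g ∘ ⇑e) ξ - g ξ) j hs h0s, hsub,
        iteratedFDerivWithin_of_isOpen (f := g ∘ ⇑e) j hs h0s,
        iteratedFDerivWithin_of_isOpen (f := g) j hs h0s]
    have hglob_comp : iteratedFDeriv ℝ j (g ∘ ⇑e) 0 =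
        T.compContinuousLinearMap (fun _ => (e : Rd d →L[ℝ] Rd d)) := by
      have hpre : (0:Rd d) ∈ ⇑e ⁻¹' t := by simp [Set.mem_preimage, he0, h0t]
      rw [← iteratedFDerivWithin_of_isOpen (f := g ∘ ⇑e) j (ht.preimage e.continuous) hpre,
        hcomp, he0, iteratedFDerivWithin_of_isOpen (f := g) j ht h0t]
    rw [hglob_sub, hglob_comp] at h0
    exact sub_eq_zero.mp h0
  -- T = 0
  have hTzero : T = 0 := by
    ext x
    set wc : ℕ → Matrix (Fin d) (Fin d) ℂ := fun n => (↑(w⁻¹ ^ n) : Matrix (Fin d) (Fin d) ℂ)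
      with hwc
    have hwcnorm : Tendsto (fun n => ‖wc n‖) atTop (nhds 0) := by
      have : ∀ n : ℕ, wc n = (↑w⁻¹ : Matrix (Fin d) (Fin d) ℂ) ^ n := by
        intro n
        rw [hwc]
        exact Units.val_pow_eq_pow_val _ _
      simpa [this] using hwt
    set y : Rd d → ℕ → Rd d := fun v n i => ((wc n).mulVec (fun k => (v k : ℂ)) i).re with hy
    have hy0 : ∀ v, y v 0 = v := by
      intro v
      funext i
      simp [hy, hwc, Matrix.one_mulVec]
    have hrec : ∀ v n, e (y v (n+1)) = y v n := by
      intro v n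
      rw [he]
      funext i
      have hSw : S * wc (n+1) = wc n := by
        rw [hwc, ← hw, ← Units.val_mul]
        congr 1
        rw [pow_succ']
        rw [← mul_assoc, mul_inv_cancel, one_mul]
      have hstep : ∀ z : Fin d → ℂ, Rm.mulVec (fun k => (z k).re) i = (S.mulVec z i).re := by
        intro z
        simp only [Matrix.mulVec, dotProduct, hSdef, Matrix.map_apply, Complex.re_sum]
        congr 1
        funext k
        simp [Complex.mul_re]
      have hL : mulVecT M (y v (n+1)) i = Rm.mulVec (fun k => ((wc (n+1)).mulVec
          (fun k' => ((v k' : ℝ) : ℂ)) k).re) i := by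
        simp [mulVecT, Matrix.mulVec, dotProduct, hRm, Matrix.map_apply, hy]
      rw [hL, hstep, Matrix.mulVec_mulVec, hSw]
    have htend : ∀ v : Rd d, Tendsto (fun n => y v n) atTop (nhds 0) := by
      intro v
      rw [tendsto_pi_nhds]
      intro i
      have hb : ∀ n, ‖y v n i‖ ≤ ‖wc n‖ * ‖(fun k => ((v k : ℝ) : ℂ))‖ := by
        intro n
        calc ‖y v n i‖ ≤ ‖(wc n).mulVec (fun k => ((v k : ℝ) : ℂ)) i‖ := by
              simpa [Real.norm_eq_abs, hy] using Complex.abs_re_le_norm _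
          _ ≤ ‖(wc n).mulVec (fun k => ((v k : ℝ) : ℂ))‖ := by
              exact norm_le_pi_norm _ i
          _ ≤ ‖wc n‖ * ‖(fun k => ((v k : ℝ) : ℂ))‖ := Matrix.linfty_opNorm_mulVec _ _
      have : Tendsto (fun n => ‖wc n‖ * ‖(fun k => ((v k : ℝ) : ℂ))‖) atTop (nhds 0) := by
        simpa using hwcnorm.mul_const _
      exact squeeze_zero_norm hb this
    have hiter : ∀ n, T x = T (fun i => y (x i) n) := by
      intro n
      induction n with
      | zero =>
        congr 1
        funext i
        exact (hy0 (x i)).symm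
      | succ n ih =>
        have h := congrFun (congrArg DFunLike.coe hTinv) (fun i => y (x i) (n+1))
        rw [ContinuousMultilinearMap.compContinuousLinearMap_apply] at h
        have harg : (fun i : Fin j => y (x i) n)
            = fun i => ((e : Rd d →L[ℝ] Rd d) (y (x i) (n+1))) := by
          funext i
          show y (x i) n = e (y (x i) (n+1))
          exact (hrec (x i) n).symm
        rw [ih, harg]
        exact h
    have hlim : Tendsto (fun n => T (fun i => y (x i) n)) atTop (nhds (T (fun _ => 0))) := by
      have harg : Tendsto (fun n => (fun i => y (x i) n)) atTop (nhds (fun _ => 0)) := by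
        rw [tendsto_pi_nhds]
        intro i
        exact htend (x i)
      exact (T.cont.tendsto _).comp harg
    have hconst : Tendsto (fun _ : ℕ => T x) atTop (nhds (T (fun _ => 0))) := by
      have : (fun n => T (fun i => y (x i) n)) = fun _ : ℕ => T x := by
        funext n
        exact (hiter n).symm
      rw [← this]
      exact hlim
    have hx0 : T x = T (fun _ => 0) := tendsto_nhds_unique tendsto_const_nhds hconst
    have hzero : T (fun _ => (0:Rd d)) = 0 := T.map_coord_zero ⟨0, hjpos⟩ rfl
    rw [hx0, hzero]
    rfl
  -- final assembly
  have hconst1 : iteratedFDeriv ℝ j (fun ξ => g ξ - 1) 0 = T := by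
    have h1 : (fun ξ : Rd d => g ξ - 1) = fun ξ => g ξ + (fun _ : Rd d => (-1:ℂ)) ξ := by
      funext ξ
      ring
    have hadd := iteratedFDerivWithin_add_apply' (f := g) (g := fun _ : Rd d => (-1:ℂ))
      (hgt 0 h0t) contDiffWithinAt_const ht.uniqueDiffOn h0t
    rw [← iteratedFDerivWithin_of_isOpen (f := fun ξ => g ξ - 1) j ht h0t, h1, hadd,
      iteratedFDerivWithin_const_of_ne hjpos.ne' _ t, Pi.zero_apply,
      iteratedFDerivWithin_of_isOpen (f := g) j ht h0t, add_zero]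
  rw [hconst1, hTzero]



end StmtAux

end
end

section
/- Let M be a d×d dilation matrix, a ∈ (l₀(ℤ^d))^{r×r}, and let φ be an r×1 vector of compactly supported distributions with \widehat{φ}(M^T ξ) = \widehat{a}(ξ) \widehat{φ}(ξ) and \widehat{φ}(0) ≠ 0. If a has order m sum rules with respect to M with matching filter υ ∈ (l₀(ℤ^d))^{1×r} (i.e., \widehat{υ}(M^T ξ)\widehat{a}(ξ+2πω) = δ(ω)\widehat{υ}(ξ) + O(‖ξ‖^m) as ξ → 0 for all ω ∈ Ω_M) and \widehat{υ}(0)\widehat{φ}(0) = 1, then \widehat{υ}(ξ)\widehat{φ}(ξ) = 1 + O(‖ξ‖^m) as ξ → 0. -/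
open scoped BigOperators Classical
open Complex Matrix

noncomputable section

/-! ### Auxiliary lemmas -/

section Aux
open Filter Topology

lemma dotZR_smooth' {d : ℕ} (k : Zd d) : ContDiff ℝ (⊤ : ℕ∞) fun ξ : Rd d => dotZR k ξ := by
  have h : (fun ξ : Rd d => dotZR k ξ) = fun ξ => ∑ j, (k j : ℝ) * ξ j := rfl
  rw [h]
  exact ContDiff.sum fun t _ => contDiff_const.mul (contDiff_apply ℝ ℝ t)

lemma symbol_entry_smooth' {d r s : ℕ} (u : Zd d →₀ Matrix (Fin r) (Fin s) ℂ)
    (i : Fin r) (j : Fin s) : ContDiff ℝ (⊤ : ℕ∞) fun ξ : Rd d => (symbol u ξ) i j := by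
  have h : (fun ξ : Rd d => (symbol u ξ) i j)
      = fun ξ => ∑ k ∈ u.support, Complex.exp (-(Complex.I * (dotZR k ξ : ℂ))) * u k i j := by
    funext ξ
    simp [symbol, Finsupp.sum, Matrix.sum_apply, Matrix.smul_apply, smul_eq_mul]
  rw [h]
  refine ContDiff.sum fun k _ => ContDiff.mul ?_ contDiff_const
  exact Complex.contDiff_exp.comp
    ((contDiff_const.mul (Complex.ofRealCLM.contDiff.comp (dotZR_smooth' k))).neg)

lemma mulVecT_smooth' {d : ℕ} (M : Matrix (Fin d) (Fin d) ℤ) :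
    ContDiff ℝ (⊤ : ℕ∞) fun ξ : Rd d => mulVecT M ξ :=
  contDiff_pi.mpr fun i => ContDiff.sum fun t _ => contDiff_const.mul (contDiff_apply ℝ ℝ t)

lemma vanishesTo_mul' {d m : ℕ} {h ψ : Rd d → ℂ} (hh : ContDiff ℝ (⊤ : ℕ∞) h)
    (hψ : ContDiff ℝ (⊤ : ℕ∞) ψ) (hv : vanishesTo m h) :
    vanishesTo m fun ξ => h ξ * ψ ξ := by
  intro j hj
  rw [← norm_le_zero_iff]
  refine le_trans (norm_iteratedFDeriv_mul_le hh hψ 0 (mod_cast le_top)) ?_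
  refine le_of_eq (Finset.sum_eq_zero fun i hi => ?_)
  rw [hv i (lt_of_le_of_lt (Nat.lt_succ_iff.mp (Finset.mem_range.mp hi)) hj)]
  simp

lemma vanishesTo_sum' {d m : ℕ} {ι : Type*} (s : Finset ι) (f : ι → Rd d → ℂ)
    (hf : ∀ i ∈ s, ContDiff ℝ (⊤ : ℕ∞) (f i)) (hv : ∀ i ∈ s, vanishesTo m (f i)) :
    vanishesTo m fun ξ => ∑ i ∈ s, f i ξ := by
  intro j hj
  have h1 := iteratedFDeriv_sum (𝕜 := ℝ) (f := f) (u := s) (i := j)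
    (fun i hi => (hf i hi).of_le (mod_cast le_top))
  have h2 : (fun ξ : Rd d => ∑ i ∈ s, f i ξ) = (∑ i ∈ s, f i ·) := by
    funext ξ; simp
  rw [h2, h1]
  simp only [Finset.sum_apply]
  exact Finset.sum_eq_zero fun i hi => hv i hi j hj

lemma coord_le_norm' {d : ℕ} (y : EuclideanSpace ℂ (Fin d)) (i : Fin d) :
    ‖y i‖ ≤ ‖y‖ := by
  rw [EuclideanSpace.norm_eq]
  have h1 : ‖y i‖ = Real.sqrt (‖y i‖ ^ 2) := by
    rw [Real.sqrt_sq (norm_nonneg _)]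
  rw [h1]
  apply Real.sqrt_le_sqrt
  exact Finset.single_le_sum (f := fun j => ‖y j‖ ^ 2) (fun j _ => by positivity)
    (Finset.mem_univ i)

/-- if all complex eigenvalues of `B` have modulus `< 1`, then `Bⁿ x → 0`. -/
lemma pow_mulVec_tendsto_zero' {d : ℕ} (B : Matrix (Fin d) (Fin d) ℝ)
    (hspec : ∀ ν ∈ spectrum ℂ (B.map (Complex.ofRealHom : ℝ →+* ℂ)), ‖ν‖ < 1)
    (x : Rd d) :
    Tendsto (fun n : ℕ => ‖(B ^ n) *ᵥ x‖) atTop (𝓝 0) := by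
  rcases Nat.eq_zero_or_pos d with hd | hd
  · subst hd
    have h0 : ∀ n : ℕ, ‖(B ^ n) *ᵥ x‖ = 0 := by
      intro n
      have h1 : (B ^ n) *ᵥ x = 0 := Subsingleton.elim _ _
      rw [h1, norm_zero]
    simpa [h0] using tendsto_const_nhds (α := ℝ) (x := 0) (f := atTop (α := ℕ))
  haveI : Nonempty (Fin d) := ⟨⟨0, hd⟩⟩
  set Bc : Matrix (Fin d) (Fin d) ℂ := B.map (Complex.ofRealHom : ℝ →+* ℂ) with hBc
  set a : EuclideanSpace ℂ (Fin d) →L[ℂ] EuclideanSpace ℂ (Fin d) :=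
    Matrix.toEuclideanCLM (𝕜 := ℂ) Bc with ha
  have hspec' : ∀ ν ∈ spectrum ℂ a, ‖ν‖₊ < 1 := by
    intro ν hν
    rw [ha, AlgEquiv.spectrum_eq (Matrix.toEuclideanCLM (𝕜 := ℂ)) Bc] at hν
    have h2 := hspec ν hν
    rw [← NNReal.coe_lt_coe]
    simpa using h2
  have hrad : spectralRadius ℂ a < 1 := by
    have h3 := spectrum.spectralRadius_lt_of_forall_lt a hspec'
    simpa using h3
  have hgel := spectrum.pow_nnnorm_pow_one_div_tendsto_nhds_spectralRadius a
  obtain ⟨r, hr1, hr2⟩ := ENNReal.lt_iff_exists_nnreal_btwn.mp hrad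
  have hr2' : r < 1 := by exact_mod_cast hr2
  have hev : ∀ᶠ n : ℕ in atTop, (‖a ^ n‖₊ : ENNReal) ^ (1 / (n:ℝ)) < (r : ENNReal) :=
    hgel.eventually_lt_const hr1
  have hevn : ∀ᶠ n : ℕ in atTop, ‖a ^ n‖ ≤ (r : ℝ) ^ n := by
    filter_upwards [hev, eventually_ge_atTop 1] with n hn hn1
    have hne : (n : ℝ) ≠ 0 := by positivity
    have h2 : ((‖a ^ n‖₊ : ENNReal) ^ (1 / (n:ℝ))) ^ (n : ℝ) ≤ (r : ENNReal) ^ (n:ℝ) :=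
      ENNReal.rpow_le_rpow hn.le (by positivity)
    have l1 : ((‖a ^ n‖₊ : ENNReal) ^ (1 / (n:ℝ))) ^ (n:ℝ) = (‖a ^ n‖₊ : ENNReal) := by
      rw [← ENNReal.rpow_mul, one_div, inv_mul_cancel₀ hne, ENNReal.rpow_one]
    have l2 : ((r : ENNReal)) ^ ((n:ℕ):ℝ) = ((r ^ n : NNReal) : ENNReal) := by
      rw [ENNReal.rpow_natCast, ENNReal.coe_pow]
    rw [l1, l2] at h2
    have h3 : ‖a ^ n‖₊ ≤ r ^ n := ENNReal.coe_le_coe.mp h2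
    calc ‖a ^ n‖ = ((‖a ^ n‖₊ : ℝ)) := rfl
    _ ≤ ((r ^ n : NNReal) : ℝ) := by exact_mod_cast h3
    _ = (r:ℝ) ^ n := by push_cast; ring
  have hpow : Tendsto (fun n : ℕ => ‖a ^ n‖) atTop (𝓝 0) := by
    have h0 : Tendsto (fun n : ℕ => (r:ℝ) ^ n) atTop (𝓝 0) :=
      tendsto_pow_atTop_nhds_zero_of_lt_one r.2 (by exact_mod_cast hr2')
    exact squeeze_zero' (Eventually.of_forall fun n => norm_nonneg _) hevn h0
  set xc : EuclideanSpace ℂ (Fin d) := (WithLp.equiv _ _).symm fun j => (x j : ℂ) with hxc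
  have hbound : ∀ n : ℕ, ‖(B ^ n) *ᵥ x‖ ≤ ‖a ^ n‖ * ‖xc‖ := by
    intro n
    have hBcn : Bc ^ n = (B ^ n).map (Complex.ofRealHom : ℝ →+* ℂ) := by
      rw [hBc, ← RingHom.mapMatrix_apply, ← RingHom.mapMatrix_apply, ← map_pow]
    have hineq : ∀ i : Fin d, ‖((B ^ n) *ᵥ x) i‖ ≤ ‖a ^ n‖ * ‖xc‖ := by
      intro i
      have h1 : ((Complex.ofRealHom : ℝ →+* ℂ)) (((B ^ n) *ᵥ x) i)
          = ((Bc ^ n) *ᵥ (fun j => (x j : ℂ))) i := by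
        rw [RingHom.map_mulVec, hBcn]
        rfl
      have h2 : (Bc ^ n) *ᵥ (fun j => (x j : ℂ))
          = WithLp.equiv _ _ ((a ^ n) xc) := by
        rw [ha, ← map_pow, WithLp.equiv_apply, Matrix.ofLp_toEuclideanCLM]
        simp [hxc]
      have h3 : ‖((a ^ n) xc) i‖ ≤ ‖(a ^ n) xc‖ := coord_le_norm' _ i
      calc ‖((B ^ n) *ᵥ x) i‖ = ‖((Bc ^ n) *ᵥ (fun j => (x j : ℂ))) i‖ := by
            rw [← h1]; simp
      _ = ‖((a ^ n) xc) i‖ := by rw [h2]; rfl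
      _ ≤ ‖(a ^ n) xc‖ := h3
      _ ≤ ‖a ^ n‖ * ‖xc‖ := (a ^ n).le_opNorm xc
    refine pi_norm_le_iff_of_nonneg (by positivity) |>.mpr hineq
  have hlim : Tendsto (fun n : ℕ => ‖a ^ n‖ * ‖xc‖) atTop (𝓝 0) := by
    simpa using hpow.mul_const ‖xc‖
  exact squeeze_zero' (Eventually.of_forall fun n => norm_nonneg _)
    (Eventually.of_forall hbound) hlim

lemma det_map_int' {d : ℕ} (M : Matrix (Fin d) (Fin d) ℤ) :
    (M.map fun z => (z : ℂ)).det = (M.det : ℂ) := by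
  have h := (Int.castRingHom ℂ).map_det M
  simpa using h.symm

lemma dilation_det_ne_zero' {d : ℕ} {M : Matrix (Fin d) (Fin d) ℤ} (hM : IsDilation M) :
    (M.det : ℂ) ≠ 0 := by
  intro h
  have hnu : ¬ IsUnit (M.map fun z => (z : ℂ)) := by
    rw [Matrix.isUnit_iff_isUnit_det, det_map_int', h]
    simp
  have h0 : (0 : ℂ) ∈ spectrum ℂ (M.map fun z => (z : ℂ)) := by
    rw [spectrum.mem_iff]
    intro hu
    simp only [map_zero, zero_sub] at hu
    have h2 := hu.neg
    rw [neg_neg] at h2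
    exact hnu h2
  have h3 := hM 0 h0
  simp at h3
  linarith

lemma spec_of_inv_lt_one' {d : ℕ} {M : Matrix (Fin d) (Fin d) ℤ} (hM : IsDilation M)
    {B : Matrix (Fin d) (Fin d) ℝ}
    (hCB : ((Mᵀ).map fun z => (z : ℝ)) * B = 1)
    (hBC : B * ((Mᵀ).map fun z => (z : ℝ)) = 1) :
    ∀ ν ∈ spectrum ℂ (B.map (Complex.ofRealHom : ℝ →+* ℂ)), ‖ν‖ < 1 := by
  intro ν hν
  set Ac : Matrix (Fin d) (Fin d) ℂ := ((Mᵀ).map fun z => (z : ℝ)).map Complex.ofRealHom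
    with hAc
  set Bc : Matrix (Fin d) (Fin d) ℂ := B.map (Complex.ofRealHom : ℝ →+* ℂ) with hBcdef
  have hmap : ∀ X Y : Matrix (Fin d) (Fin d) ℝ, X * Y = 1 →
      (X.map Complex.ofRealHom) * (Y.map Complex.ofRealHom) = 1 := by
    intro X Y hXY
    have h := congrArg (fun Z : Matrix (Fin d) (Fin d) ℝ =>
      (Complex.ofRealHom : ℝ →+* ℂ).mapMatrix Z) hXY
    simpa using h
  have hCBc : Ac * Bc = 1 := hmap _ _ hCB
  have hBCc : Bc * Ac = 1 := hmap _ _ hBC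
  have hAcT : Ac = (M.map fun z => (z : ℂ))ᵀ := by
    rw [hAc, Matrix.map_map, ← Matrix.transpose_map]
    rfl
  have hBcUnit : IsUnit Bc := ⟨⟨Bc, Ac, hBCc, hCBc⟩, rfl⟩
  have hdetBc : Bc.det ≠ 0 := by
    have h := (Matrix.isUnit_iff_isUnit_det Bc).mp hBcUnit
    exact IsUnit.ne_zero h
  have hdet : (ν • (1 : Matrix (Fin d) (Fin d) ℂ) - Bc).det = 0 := by
    rw [spectrum.mem_iff] at hν
    by_contra hne
    exact hν ((Matrix.isUnit_iff_isUnit_det _).mpr (isUnit_iff_ne_zero.mpr (by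
      rwa [Algebra.algebraMap_eq_smul_one])))
  have hν0 : ν ≠ 0 := by
    intro h0
    rw [h0, zero_smul, zero_sub, Matrix.det_neg] at hdet
    rcases mul_eq_zero.mp hdet with h | h
    · exact pow_ne_zero _ (by norm_num : (-1 : ℂ) ≠ 0) h
    · exact hdetBc h
  have hdet2 : (ν • Ac - 1).det = 0 := by
    have h : (ν • (1 : Matrix (Fin d) (Fin d) ℂ) - Bc) * Ac = ν • Ac - 1 := by
      rw [Matrix.sub_mul, Matrix.smul_mul, Matrix.one_mul, hBCc]
    rw [← h, Matrix.det_mul, hdet, zero_mul]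
  have hdet3 : ((ν⁻¹ : ℂ) • (1 : Matrix (Fin d) (Fin d) ℂ) - Ac).det = 0 := by
    have hfac : ν • Ac - 1 = ν • (Ac - ν⁻¹ • (1 : Matrix (Fin d) (Fin d) ℂ)) := by
      rw [smul_sub, smul_smul, mul_inv_cancel₀ hν0, one_smul]
    rw [hfac, Matrix.det_smul] at hdet2
    rcases mul_eq_zero.mp hdet2 with h | h
    · exact absurd h (pow_ne_zero _ hν0)
    · rw [show (ν⁻¹ : ℂ) • (1 : Matrix (Fin d) (Fin d) ℂ) - Ac = -(Ac - ν⁻¹ • 1) from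
        (neg_sub _ _).symm, Matrix.det_neg, h, mul_zero]
  have hmem : (ν⁻¹ : ℂ) ∈ spectrum ℂ (M.map fun z => (z : ℂ)) := by
    rw [spectrum.mem_iff]
    intro hu
    rw [Algebra.algebraMap_eq_smul_one, Matrix.isUnit_iff_isUnit_det] at hu
    have hTdet : ((ν⁻¹ : ℂ) • (1 : Matrix (Fin d) (Fin d) ℂ) - M.map fun z => (z : ℂ)).det
        = ((ν⁻¹ : ℂ) • (1 : Matrix (Fin d) (Fin d) ℂ) - Ac).det := by
      rw [hAcT, ← Matrix.det_transpose ((ν⁻¹ : ℂ) • (1 : Matrix (Fin d) (Fin d) ℂ)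
        - M.map fun z => (z : ℂ)), Matrix.transpose_sub, Matrix.transpose_smul,
        Matrix.transpose_one]
    rw [hTdet, hdet3] at hu
    exact hu.ne_zero rfl
  have h1 := hM _ hmem
  rw [norm_inv] at h1
  have habs : ‖ν‖ ≠ 0 := by
    simpa using hν0
  exact (one_lt_inv₀ (lt_of_le_of_ne (norm_nonneg _) (Ne.symm habs))).mp h1

lemma multilinear_eq_zero' {d j : ℕ} (hj : 1 ≤ j) (C B : Matrix (Fin d) (Fin d) ℝ)
    (hCB : C * B = 1)
    (hB : ∀ x : Rd d, Tendsto (fun n : ℕ => ‖(B ^ n) *ᵥ x‖) atTop (𝓝 0))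
    (T : ContinuousMultilinearMap ℝ (fun _ : Fin j => Rd d) ℂ)
    (hT : ∀ v : Fin j → Rd d, T (fun i => C *ᵥ (v i)) = T v) : T = 0 := by
  have hiter : ∀ (n : ℕ) (v : Fin j → Rd d), T v = T (fun i => (B ^ n) *ᵥ (v i)) := by
    intro n
    induction n with
    | zero => intro v; simp [Matrix.one_mulVec]
    | succ n ih =>
      intro v
      have hkey : ∀ y : Rd d, C *ᵥ ((B ^ (n+1)) *ᵥ y) = (B ^ n) *ᵥ y := by
        intro y
        rw [Matrix.mulVec_mulVec, pow_succ' B n, ← Matrix.mul_assoc, hCB, Matrix.one_mul]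
      have h := hT (fun i => (B ^ (n+1)) *ᵥ (v i))
      simp only [hkey] at h
      rw [ih v, ← h]
  have hzero : ∀ v : Fin j → Rd d, T v = 0 := by
    intro v
    have hb : ∀ n : ℕ, ‖T v‖ ≤ ‖T‖ * ∏ i, ‖(B ^ n) *ᵥ (v i)‖ := by
      intro n
      rw [hiter n v]
      exact T.le_opNorm _
    have hlim : Tendsto (fun n : ℕ => ‖T‖ * ∏ i, ‖(B ^ n) *ᵥ (v i)‖) atTop (𝓝 0) := by
      have hprod : Tendsto (fun n : ℕ => ∏ i : Fin j, ‖(B ^ n) *ᵥ (v i)‖) atTop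
          (𝓝 (∏ _i : Fin j, (0:ℝ))) :=
        tendsto_finset_prod _ (fun i _ => hB (v i))
      have hz : (∏ _i : Fin j, (0:ℝ)) = 0 := by
        rw [Finset.prod_const]
        apply zero_pow
        simpa using (by omega : j ≠ 0)
      rw [hz] at hprod
      simpa using tendsto_const_nhds.mul hprod
    have hle : ‖T v‖ ≤ 0 :=
      ge_of_tendsto hlim (Eventually.of_forall hb)
    rw [← norm_eq_zero]
    exact le_antisymm hle (norm_nonneg _)
  ext v
  simp [hzero]

end Aux

/-- for a refinable vector `φ` with refinement filter `a` having order `m`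
sum rules with matching filter `vgu` normalized by `v̂gu(0)φ̂(0) = 1`, one has
`v̂gu(ξ)φ̂(ξ) = 1 + O(‖ξ‖^m)` as `ξ → 0`.  (Here `φ` is represented by its Fourier
transform `φhat`, which is smooth since `φ` is compactly supported.) -/
theorem stmt4 {d r : ℕ} (M : Matrix (Fin d) (Fin d) ℤ) (hM : IsDilation M)
    (m : ℕ) (a : Zd d →₀ Matrix (Fin r) (Fin r) ℂ)
    (φhat : Rd d → Matrix (Fin r) (Fin 1) ℂ)
    (hφ : ∀ i, ContDiff ℝ (⊤ : ℕ∞) fun ξ => φhat ξ i 0)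
    (href : ∀ ξ, φhat (mulVecT M ξ) = symbol a ξ * φhat ξ)
    (hφ0 : φhat 0 ≠ 0)
    (vgu : Zd d →₀ Matrix (Fin 1) (Fin r) ℂ)
    (hsr : HasSumRules M m a vgu)
    (hnorm : (symbol vgu 0 * φhat 0) 0 0 = 1) :
    vanishesTo m (fun ξ => (symbol vgu ξ * φhat ξ) 0 0 - 1) := by
  classical
  -- the real matrix of `ξ ↦ M^T ξ` and its inverse
  set Cr : Matrix (Fin d) (Fin d) ℝ := (Mᵀ).map fun z => (z : ℝ) with hCr
  have hdetM : (M.det : ℝ) ≠ 0 := by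
    have h := dilation_det_ne_zero' hM
    exact_mod_cast fun h0 => h (by exact_mod_cast h0)
  have hdetC : IsUnit Cr.det := by
    apply isUnit_iff_ne_zero.mpr
    have h : Cr.det = ((Mᵀ).det : ℝ) := by
      have := (Int.castRingHom ℝ).map_det (Mᵀ)
      simpa [hCr] using this.symm
    rw [h, Matrix.det_transpose]
    exact_mod_cast hdetM
  set B : Matrix (Fin d) (Fin d) ℝ := Cr⁻¹ with hB
  have hCB : Cr * B = 1 := Matrix.mul_nonsing_inv _ hdetC
  have hBC : B * Cr = 1 := Matrix.nonsing_inv_mul _ hdetC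
  have hBpow : ∀ x : Rd d, Filter.Tendsto (fun n : ℕ => ‖(B ^ n) *ᵥ x‖)
      Filter.atTop (nhds 0) :=
    pow_mulVec_tendsto_zero' B (spec_of_inv_lt_one' hM hCB hBC)
  -- `mulVecT M` as multiplication by `Cr`
  have hmv : ∀ ξ : Rd d, mulVecT M ξ = Cr *ᵥ ξ := by
    intro ξ
    funext i
    simp [mulVecT, hCr, Matrix.mulVec, dotProduct, Matrix.map_apply,
      Matrix.transpose_apply]
  -- the function F
  set F : Rd d → ℂ := fun ξ => (symbol vgu ξ * φhat ξ) 0 0 - 1 with hF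
  have hFeq : F = fun ξ => (∑ i : Fin r, (symbol vgu ξ) 0 i * φhat ξ i 0) - 1 := by
    funext ξ
    simp [hF, Matrix.mul_apply]
  have hFsmooth : ContDiff ℝ (⊤ : ℕ∞) F := by
    rw [hFeq]
    exact (ContDiff.sum fun i _ =>
      (symbol_entry_smooth' vgu 0 i).mul (hφ i)).sub contDiff_const
  have hF0 : F 0 = 0 := by
    simp [hF, hnorm]
  -- the error function G
  set G : Rd d → ℂ := fun ξ => F (mulVecT M ξ) - F ξ with hG
  have hGsmooth : ContDiff ℝ (⊤ : ℕ∞) G :=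
    (hFsmooth.comp (mulVecT_smooth' M)).sub hFsmooth
  -- 0 ∈ Ω_M
  have hmem0 : (0 : Rd d) ∈ OmegaSet M := by
    constructor
    · intro i
      refine ⟨0, ?_⟩
      simp [mulVecT]
    · intro i
      simp
  -- G vanishes to order m
  have hGvan : vanishesTo m G := by
    have hGeq : G = fun ξ => ∑ i : Fin r,
        (((symbol vgu (mulVecT M ξ) * symbol a ξ) 0 i - (symbol vgu ξ) 0 i) *
          φhat ξ i 0) := by
      funext ξ
      rw [hG]
      simp only [hF]
      rw [href ξ, ← Matrix.mul_assoc]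
      simp only [Matrix.mul_apply, Matrix.sub_apply]
      rw [sub_sub_sub_cancel_right, ← Finset.sum_sub_distrib]
      congr 1
      funext i
      ring
    rw [hGeq]
    refine vanishesTo_sum' Finset.univ _ (fun i _ => ?_) (fun i _ => ?_)
    · refine ContDiff.mul (ContDiff.sub ?_ (symbol_entry_smooth' vgu 0 i)) (hφ i)
      have h : (fun ξ : Rd d => (symbol vgu (mulVecT M ξ) * symbol a ξ) 0 i)
          = fun ξ => ∑ t : Fin r, (symbol vgu (mulVecT M ξ)) 0 t * (symbol a ξ) t i := by
        funext ξ
        simp [Matrix.mul_apply]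
      rw [h]
      exact ContDiff.sum fun t _ =>
        ((symbol_entry_smooth' vgu 0 t).comp (mulVecT_smooth' M)).mul
          (symbol_entry_smooth' a t i)
    · refine vanishesTo_mul' ?_ (hφ i) ?_
      · refine ContDiff.sub ?_ (symbol_entry_smooth' vgu 0 i)
        have h : (fun ξ : Rd d => (symbol vgu (mulVecT M ξ) * symbol a ξ) 0 i)
            = fun ξ => ∑ t : Fin r, (symbol vgu (mulVecT M ξ)) 0 t * (symbol a ξ) t i := by
          funext ξ
          simp [Matrix.mul_apply]
        rw [h]
        exact ContDiff.sum fun t _ =>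
          ((symbol_entry_smooth' vgu 0 t).comp (mulVecT_smooth' M)).mul
            (symbol_entry_smooth' a t i)
      · have h := hsr.2 0 hmem0 i
        have heq : (fun ξ : Rd d =>
            (symbol vgu (mulVecT M ξ) * symbol a (ξ + (2 * Real.pi) • (0 : Rd d))) 0 i -
            (if (0 : Rd d) = (0 : Rd d) then (1:ℂ) else 0) * (symbol vgu ξ) 0 i)
            = fun ξ => (symbol vgu (mulVecT M ξ) * symbol a ξ) 0 i - (symbol vgu ξ) 0 i := by
          funext ξ
          rw [if_pos rfl, one_mul, smul_zero, add_zero]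
        rwa [heq] at h
  -- the continuous linear map ξ ↦ M^T ξ
  set Lc : Rd d →L[ℝ] Rd d := (Matrix.mulVecLin Cr).toContinuousLinearMap with hLc
  have hLcapp : ∀ ξ : Rd d, Lc ξ = mulVecT M ξ := by
    intro ξ
    rw [hmv]
    rfl
  -- main argument
  intro j hj
  rcases Nat.eq_zero_or_pos j with hj0 | hj1
  · subst hj0
    rw [← norm_eq_zero, norm_iteratedFDeriv_zero]
    show ‖F 0‖ = 0
    rw [hF0, norm_zero]
  · -- T ∘ L^⊗j = T
    set T := iteratedFDeriv ℝ j F 0 with hT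
    have hcomp : iteratedFDeriv ℝ j (F ∘ Lc) 0
        = T.compContinuousLinearMap (fun _ => Lc) := by
      have h := ContinuousLinearMap.iteratedFDeriv_comp_right (i := j) Lc hFsmooth (0 : Rd d)
        (mod_cast le_top)
      rw [h, map_zero]
    have hFLG : F ∘ Lc = fun ξ => F ξ + G ξ := by
      funext ξ
      simp only [Function.comp_apply, hLcapp ξ, hG]
      ring
    have hDG : iteratedFDeriv ℝ j G 0 = 0 := hGvan j hj
    have hTT : T.compContinuousLinearMap (fun _ => Lc) = T := by
      rw [← hcomp, hFLG,
        iteratedFDeriv_add_apply' (hFsmooth.of_le (mod_cast le_top)).contDiffAt (hGsmooth.of_le (mod_cast le_top)).contDiffAt,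
        hDG, add_zero]
    have hTmul : ∀ v : Fin j → Rd d, T (fun i => Cr *ᵥ (v i)) = T v := by
      intro v
      have h := congrFun (congrArg DFunLike.coe hTT) v
      rw [← h]
      rfl
    have hzero : T = 0 := multilinear_eq_zero' hj1 Cr B hCB hBpow T hTmul
    exact hzero


end
end

section
/- Let m, n ∈ ℕ, let \widehat{v} be a 1×r row vector and \widehat{u} an r×1 column vector of functions infinitely differentiable at 0, satisfying \widehat{v}(ξ)\widehat{u}(ξ) = 1 + O(‖ξ‖^m) as ξ → 0. Then there exists a 1×r vector \widehat{\mathring{v}} of 2πℤ^d-periodic trigonometric polynomials such that \widehat{\mathring{v}}(ξ) = \widehat{v}(ξ) + O(‖ξ‖^m) and \widehat{\mathring{v}}(ξ)\widehat{u}(ξ) = 1 + O(‖ξ‖^n) as ξ → 0. -/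
open scoped BigOperators Classical
open Complex Matrix

noncomputable section

namespace Aux6
open Filter

variable {d : ℕ}

lemma iteratedFDeriv_congr_nhds {f g : Rd d → ℂ} {j : ℕ} (h : f =ᶠ[nhds (0:Rd d)] g) :
    iteratedFDeriv ℝ j f 0 = iteratedFDeriv ℝ j g 0 := by
  have h' : f =ᶠ[nhdsWithin (0:Rd d) Set.univ] g := by
    rwa [nhdsWithin_univ]
  have := Filter.EventuallyEq.iteratedFDerivWithin_eq (𝕜 := ℝ) h' (h.eq_of_nhds) j
  simpa [iteratedFDerivWithin_univ] using this

lemma vanishesTo_congr {m : ℕ} {f g : Rd d → ℂ} (h : f =ᶠ[nhds (0:Rd d)] g)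
    (hf : vanishesTo m f) : vanishesTo m g := fun j hj => by
  rw [← iteratedFDeriv_congr_nhds h]; exact hf j hj

lemma vanishesTo_mono {m m' : ℕ} {f : Rd d → ℂ} (h : m' ≤ m) (hf : vanishesTo m f) :
    vanishesTo m' f := fun j hj => hf j (lt_of_lt_of_le hj h)

lemma vanishesTo_add {m K : ℕ} {f g : Rd d → ℂ} (hmK : m ≤ K)
    (hf : ContDiff ℝ (K : WithTop ℕ∞) f) (hg : ContDiff ℝ (K : WithTop ℕ∞) g)
    (h1 : vanishesTo m f) (h2 : vanishesTo m g) :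
    vanishesTo m (fun ξ => f ξ + g ξ) := by
  intro j hj
  have hjK : (j : WithTop ℕ∞) ≤ (K : WithTop ℕ∞) := by
    exact_mod_cast le_trans hj.le hmK
  have : (fun ξ => f ξ + g ξ) = f + g := rfl
  rw [this, iteratedFDeriv_add_apply (hf.of_le hjK).contDiffAt (hg.of_le hjK).contDiffAt, h1 j hj, h2 j hj, add_zero]

lemma vanishesTo_neg {m : ℕ} {f : Rd d → ℂ} (h1 : vanishesTo m f) :
    vanishesTo m (fun ξ => -(f ξ)) := by
  intro j hj
  have : (fun ξ => -(f ξ)) = -f := rfl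
  rw [this, iteratedFDeriv_neg_apply, h1 j hj, neg_zero]

lemma vanishesTo_sub {m K : ℕ} {f g : Rd d → ℂ} (hmK : m ≤ K)
    (hf : ContDiff ℝ (K : WithTop ℕ∞) f) (hg : ContDiff ℝ (K : WithTop ℕ∞) g)
    (h1 : vanishesTo m f) (h2 : vanishesTo m g) :
    vanishesTo m (fun ξ => f ξ - g ξ) := by
  have := vanishesTo_add hmK hf hg.neg h1 (vanishesTo_neg h2)
  exact vanishesTo_congr (by filter_upwards with ξ; ring_nf) this

lemma vanishesTo_zero_fun {m : ℕ} : vanishesTo m (fun _ : Rd d => (0:ℂ)) := by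
  intro j hj
  exact congrFun (iteratedFDeriv_zero_fun (𝕜 := ℝ) (n := j)) 0

lemma vanishesTo_mul {m1 m2 K : ℕ} {f g : Rd d → ℂ} (hmK : m1 + m2 ≤ K)
    (hf : ContDiff ℝ (K : WithTop ℕ∞) f) (hg : ContDiff ℝ (K : WithTop ℕ∞) g)
    (h1 : vanishesTo m1 f) (h2 : vanishesTo m2 g) :
    vanishesTo (m1 + m2) (fun ξ => f ξ * g ξ) := by
  intro j hj
  have hjK : (j : WithTop ℕ∞) ≤ (K : WithTop ℕ∞) := by
    exact_mod_cast le_trans hj.le hmK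
  have hb := norm_iteratedFDeriv_mul_le (𝕜 := ℝ) (hf.of_le hjK) (hg.of_le hjK) 0
      (le_refl (j : WithTop ℕ∞))
  have hz : ∀ i ∈ Finset.range (j+1),
      (j.choose i : ℝ) * ‖iteratedFDeriv ℝ i f 0‖ * ‖iteratedFDeriv ℝ (j-i) g 0‖ = 0 := by
    intro i hi
    rcases lt_or_ge i m1 with h | h
    · rw [h1 i h, norm_zero]; ring
    · have : j - i < m2 := by
        have := Finset.mem_range.mp hi
        omega
      rw [h2 _ this, norm_zero]; ring
  rw [Finset.sum_congr rfl hz, Finset.sum_const, smul_zero] at hb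
  have : ‖iteratedFDeriv ℝ j (fun ξ => f ξ * g ξ) 0‖ ≤ 0 := hb
  simpa using norm_le_zero_iff.mp this

lemma vanishesTo_sum {m K : ℕ} {ι : Type*} (s : Finset ι) (f : ι → Rd d → ℂ) (hmK : m ≤ K)
    (hf : ∀ i ∈ s, ContDiff ℝ (K : WithTop ℕ∞) (f i)) (h : ∀ i ∈ s, vanishesTo m (f i)) :
    vanishesTo m (fun ξ => ∑ i ∈ s, f i ξ) := by
  classical
  induction s using Finset.induction_on with
  | empty => simpa using vanishesTo_zero_fun
  | insert a s hnotmem ih =>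
    have h1 : vanishesTo m (fun ξ => f a ξ + ∑ i ∈ s, f i ξ) := by
      refine vanishesTo_add hmK (hf a (Finset.mem_insert_self a s)) ?_
        (h a (Finset.mem_insert_self a s)) (ih (fun i hi => hf i (Finset.mem_insert_of_mem hi))
          (fun i hi => h i (Finset.mem_insert_of_mem hi)))
      exact ContDiff.sum fun i hi => hf i (Finset.mem_insert_of_mem hi)
    refine vanishesTo_congr ?_ h1
    filter_upwards with ξ
    rw [Finset.sum_insert hnotmem]

/-- bump-function extension of a germ-smooth function to a globally smooth one -/
lemma exists_contDiff_eventuallyEq {K : ℕ} {f : Rd d → ℂ}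
    (hf : ContDiffAt ℝ (K : WithTop ℕ∞) f 0) :
    ∃ g : Rd d → ℂ, ContDiff ℝ (K : WithTop ℕ∞) g ∧ g =ᶠ[nhds (0:Rd d)] f := by
  obtain ⟨u, hu, hcd⟩ := hf.contDiffOn le_rfl (by simp)
  obtain ⟨ε, hε, hball⟩ := Metric.mem_nhds_iff.mp hu
  set χ : ContDiffBump (0 : Rd d) :=
    ⟨ε/2, 3*ε/4, by positivity, by linarith⟩ with hχ
  refine ⟨fun x => χ x • f x, ?_, ?_⟩
  · rw [contDiff_iff_contDiffAt]
    intro x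
    rcases lt_or_ge (dist x 0) ε with hx | hx
    · have hx' : x ∈ Metric.ball (0:Rd d) ε := by simpa [Metric.mem_ball] using hx
      have hfx : ContDiffAt ℝ (K : WithTop ℕ∞) f x :=
        (hcd.mono hball).contDiffAt ((Metric.isOpen_ball).mem_nhds hx')
      have hχK : ContDiff ℝ (K : WithTop ℕ∞) (χ : Rd d → ℝ) := by
        exact_mod_cast χ.contDiff (n := (K : ℕ∞))
      exact hχK.contDiffAt.smul hfx
    · have hx0 : ∀ᶠ y in nhds x, χ y • f y = (0:ℂ) := by
        have hopen : IsOpen {y : Rd d | 3*ε/4 < dist y 0} := by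
          have : Continuous fun y : Rd d => dist y 0 := continuous_id.dist continuous_const
          exact isOpen_lt continuous_const this
        have hxmem : x ∈ {y : Rd d | 3*ε/4 < dist y 0} := by
          simp only [Set.mem_setOf_eq]; linarith
        filter_upwards [hopen.mem_nhds hxmem] with y hy
        have : χ y = 0 := by
          apply χ.zero_of_le_dist
          have hout : χ.rOut = 3*ε/4 := rfl
          have hy' : 3*ε/4 < dist y 0 := hy
          rw [hout]
          linarith [hy']
        simp [this]
      exact contDiffAt_const.congr_of_eventuallyEq hx0
  · have h1 : ∀ᶠ y in nhds (0:Rd d), χ y = 1 := χ.eventuallyEq_one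
    filter_upwards [h1] with y hy
    rw [hy, one_smul]


/-! ### symbolS calculus -/

def bv (j : Fin d) : Rd d := Pi.single j 1

def expk (k : Zd d) (ξ : Rd d) : ℂ := Complex.exp (-(Complex.I * (dotZR k ξ : ℂ)))

lemma symbolS_eq_sum (w : Zd d →₀ ℂ) (ξ : Rd d) :
    symbolS w ξ = ∑ k ∈ w.support, expk k ξ * w k := rfl

lemma symbolS_sum_subset {w : Zd d →₀ ℂ} {s : Finset (Zd d)} (h : w.support ⊆ s) (ξ : Rd d) :
    symbolS w ξ = ∑ k ∈ s, expk k ξ * w k := by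
  rw [symbolS_eq_sum]
  exact Finset.sum_subset h (fun k _ hk => by
    rw [Finsupp.notMem_support_iff.mp hk, mul_zero])

lemma dotZR_zero (k : Zd d) : dotZR k (0 : Rd d) = 0 := by
  simp [dotZR]

lemma expk_zero (k : Zd d) : expk k (0 : Rd d) = 1 := by
  simp [expk, dotZR_zero]

lemma dotZR_add_left (j k : Zd d) (ξ : Rd d) : dotZR (j + k) ξ = dotZR j ξ + dotZR k ξ := by
  simp only [dotZR, ← Finset.sum_add_distrib]
  refine Finset.sum_congr rfl fun i _ => ?_
  have h2 : (j + k) i = j i + k i := rfl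
  rw [h2]; push_cast; ring

lemma expk_add (j k : Zd d) (ξ : Rd d) : expk (j + k) ξ = expk j ξ * expk k ξ := by
  rw [expk, expk, expk, ← Complex.exp_add]
  congr 1
  rw [dotZR_add_left]
  push_cast
  ring

def lmap (k : Zd d) : Rd d →L[ℝ] ℂ :=
  ∑ j, (k j : ℂ) • (Complex.ofRealCLM.comp (ContinuousLinearMap.proj j))

lemma lmap_apply (k : Zd d) (ξ : Rd d) : lmap k ξ = ((dotZR k ξ : ℝ) : ℂ) := by
  simp only [lmap, ContinuousLinearMap.sum_apply, ContinuousLinearMap.smul_apply,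
    ContinuousLinearMap.comp_apply, ContinuousLinearMap.proj_apply, Complex.ofRealCLM_apply,
    dotZR, Complex.ofReal_sum]
  refine Finset.sum_congr rfl fun i _ => ?_
  push_cast
  rw [smul_eq_mul]

lemma dotZR_bv (k : Zd d) (j : Fin d) : dotZR k (bv j) = (k j : ℝ) := by
  rw [dotZR, Finset.sum_eq_single j]
  · rw [bv, Pi.single_eq_same, mul_one]
  · intro i _ hij
    rw [bv, Pi.single_eq_of_ne hij, mul_zero]
  · intro h; exact absurd (Finset.mem_univ j) h

lemma contDiff_expk (n : WithTop ℕ∞) (k : Zd d) : ContDiff ℝ n (expk k) := by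
  have h1 : expk k = fun ξ => Complex.exp ((-(Complex.I • lmap k)) ξ) := by
    funext ξ
    simp [expk, lmap_apply, smul_eq_mul]
  rw [h1]
  exact (contDiff_exp (𝕜 := ℝ)).comp (ContinuousLinearMap.contDiff _)

lemma contDiff_symbolS (n : WithTop ℕ∞) (w : Zd d →₀ ℂ) : ContDiff ℝ n (symbolS w) := by
  have : symbolS w = fun ξ => ∑ k ∈ w.support, expk k ξ * w k := funext fun ξ => symbolS_eq_sum w ξ
  rw [this]
  exact ContDiff.sum fun k _ => (contDiff_expk n k).mul contDiff_const

lemma hasFDerivAt_expk (k : Zd d) (ξ : Rd d) :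
    HasFDerivAt (expk k) (expk k ξ • (-(Complex.I • lmap k))) ξ := by
  have h0 : HasFDerivAt (fun ξ : Rd d => -(Complex.I * (dotZR k ξ : ℂ)))
      (-(Complex.I • lmap k)) ξ := by
    have h1 : (fun ξ : Rd d => -(Complex.I * (dotZR k ξ : ℂ))) = ⇑(-(Complex.I • lmap k)) := by
      funext ξ
      simp [lmap_apply, smul_eq_mul]
    rw [h1]
    exact (-(Complex.I • lmap k)).hasFDerivAt
  exact h0.cexp

def twist (j : Fin d) (w : Zd d →₀ ℂ) : Zd d →₀ ℂ :=
  Finsupp.onFinset w.support (fun k => (-(Complex.I * (k j : ℂ))) * w k)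
    (fun k h => by
      rw [Finsupp.mem_support_iff]
      intro hw
      exact h (by simp [hw]))

lemma twist_apply (j : Fin d) (w : Zd d →₀ ℂ) (k : Zd d) :
    twist j w k = (-(Complex.I * (k j : ℂ))) * w k := rfl

lemma twist_support (j : Fin d) (w : Zd d →₀ ℂ) : (twist j w).support ⊆ w.support :=
  Finsupp.support_onFinset_subset

lemma hasFDerivAt_symbolS (w : Zd d →₀ ℂ) (ξ : Rd d) :
    HasFDerivAt (symbolS w)
      (∑ k ∈ w.support, w k • (expk k ξ • (-(Complex.I • lmap k)))) ξ := by
  have h1 : symbolS w = fun ξ => ∑ k ∈ w.support, expk k ξ * w k :=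
    funext fun ξ => symbolS_eq_sum w ξ
  rw [h1]
  exact HasFDerivAt.fun_sum fun k _ => (hasFDerivAt_expk k ξ).mul_const (w k)

lemma fderiv_symbolS_bv (w : Zd d →₀ ℂ) (j : Fin d) (ξ : Rd d) :
    fderiv ℝ (symbolS w) ξ (bv j) = symbolS (twist j w) ξ := by
  rw [(hasFDerivAt_symbolS w ξ).fderiv]
  rw [symbolS_sum_subset (twist_support j w)]
  rw [ContinuousLinearMap.sum_apply]
  refine Finset.sum_congr rfl fun k _ => ?_
  rw [twist_apply]
  simp only [ContinuousLinearMap.smul_apply, ContinuousLinearMap.neg_apply, lmap_apply,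
    dotZR_bv, smul_eq_mul]
  push_cast
  ring

def twistIter : (n : ℕ) → (Fin n → Fin d) → (Zd d →₀ ℂ) → (Zd d →₀ ℂ)
  | 0, _, w => w
  | n+1, p, w => twistIter n (Fin.init p) (twist (p (Fin.last n)) w)

lemma twistIter_support (n : ℕ) (p : Fin n → Fin d) (w : Zd d →₀ ℂ) :
    (twistIter n p w).support ⊆ w.support := by
  induction n generalizing w with
  | zero => exact fun k h => h
  | succ n ih =>
    exact (ih (Fin.init p) (twist (p (Fin.last n)) w)).trans (twist_support _ w)

lemma twistIter_apply (n : ℕ) (p : Fin n → Fin d) (w : Zd d →₀ ℂ) (k : Zd d) :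
    twistIter n p w k = (∏ i, -(Complex.I * (k (p i) : ℂ))) * w k := by
  induction n generalizing w with
  | zero => simp [twistIter]
  | succ n ih =>
    rw [twistIter, ih, twist_apply, Fin.prod_univ_castSucc]
    have : ∀ i : Fin n, Fin.init p i = p i.castSucc := fun i => rfl
    simp only [this]
    ring

lemma iteratedFDeriv_symbolS (n : ℕ) (p : Fin n → Fin d) (w : Zd d →₀ ℂ) :
    iteratedFDeriv ℝ n (symbolS w) 0 (fun i => bv (p i)) = symbolS (twistIter n p w) 0 := by
  induction n generalizing w with
  | zero => rw [iteratedFDeriv_zero_apply]; rfl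
  | succ n ih =>
    rw [iteratedFDeriv_succ_apply_right]
    have hcd : ContDiff ℝ (n : WithTop ℕ∞) (fderiv ℝ (symbolS w)) := by
      refine (contDiff_symbolS ((n : WithTop ℕ∞) + 1) w).fderiv_right le_rfl
    have hcomp := (ContinuousLinearMap.apply ℝ ℂ (bv (p (Fin.last n)))).iteratedFDeriv_comp_left
      (hcd.contDiffAt (x := 0)) (le_refl (n : WithTop ℕ∞))
    have hfun : (⇑(ContinuousLinearMap.apply ℝ ℂ (bv (p (Fin.last n)))) ∘ fderiv ℝ (symbolS w))
        = symbolS (twist (p (Fin.last n)) w) := by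
      funext ξ
      exact fderiv_symbolS_bv w _ ξ
    have h2 : iteratedFDeriv ℝ n (fderiv ℝ (symbolS w)) 0 (Fin.init fun i => bv (p i))
          ((fun i => bv (p i)) (Fin.last n))
        = (ContinuousLinearMap.apply ℝ ℂ (bv (p (Fin.last n)))).compContinuousMultilinearMap
            (iteratedFDeriv ℝ n (fderiv ℝ (symbolS w)) 0) (Fin.init fun i => bv (p i)) := rfl
    rw [h2, ← hcomp, hfun]
    have h3 : (Fin.init fun i => bv (p i)) = fun i : Fin n => bv (Fin.init p i) := rfl
    rw [h3, ih (Fin.init p)]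
    rfl

lemma iteratedFDeriv_symbolS_basis (n : ℕ) (p : Fin n → Fin d) (w : Zd d →₀ ℂ) :
    iteratedFDeriv ℝ n (symbolS w) 0 (fun i => bv (p i))
      = ∑ k ∈ w.support, (∏ i, -(Complex.I * (k (p i) : ℂ))) * w k := by
  rw [iteratedFDeriv_symbolS n p w, symbolS_sum_subset (twistIter_support n p w)]
  refine Finset.sum_congr rfl fun k _ => ?_
  rw [twistIter_apply, expk_zero, one_mul]

/-! ### symmetry of iterated derivatives -/

section Symmetry

variable {E : Type*} {F : Type*} [NormedAddCommGroup E] [NormedSpace ℝ E]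
  [NormedAddCommGroup F] [NormedSpace ℝ F]

lemma iteratedFDeriv_succ_right_eval {n : ℕ} {f : E → F}
    (hf : ContDiff ℝ ((n+1 : ℕ) : WithTop ℕ∞) f) (x : E) (m : Fin (n+1) → E) :
    iteratedFDeriv ℝ (n+1) f x m
      = iteratedFDeriv ℝ n (fun y => fderiv ℝ f y (m (Fin.last n))) x (Fin.init m) := by
  rw [iteratedFDeriv_succ_apply_right]
  have hcd : ContDiff ℝ (n : WithTop ℕ∞) (fderiv ℝ f) :=
    hf.fderiv_right (by norm_cast)
  have hcomp := (ContinuousLinearMap.apply ℝ F (m (Fin.last n))).iteratedFDeriv_comp_left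
    (hcd.contDiffAt (x := x)) (le_refl (n : WithTop ℕ∞))
  have h2 : iteratedFDeriv ℝ n (fderiv ℝ f) x (Fin.init m) (m (Fin.last n))
      = (ContinuousLinearMap.apply ℝ F (m (Fin.last n))).compContinuousMultilinearMap
          (iteratedFDeriv ℝ n (fderiv ℝ f) x) (Fin.init m) := rfl
  rw [h2, ← hcomp]
  rfl

lemma contDiff_fderiv_eval {n : ℕ} {f : E → F}
    (hf : ContDiff ℝ ((n+1 : ℕ) : WithTop ℕ∞) f) (v : E) :
    ContDiff ℝ (n : WithTop ℕ∞) (fun y => fderiv ℝ f y v) :=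
  ContDiff.continuousLinearMap_comp (ContinuousLinearMap.apply ℝ F v)
    (hf.fderiv_right (by norm_cast))

lemma fderiv_fderiv_symm {f : E → F} (hf : ContDiff ℝ ((2 : ℕ) : WithTop ℕ∞) f)
    (y : E) (v w : E) :
    fderiv ℝ (fun z => fderiv ℝ f z v) y w = fderiv ℝ (fun z => fderiv ℝ f z w) y v := by
  have hd1 : Differentiable ℝ f := hf.differentiable (by norm_cast)
  have hd2 : Differentiable ℝ (fderiv ℝ f) :=
    (hf.fderiv_right (m := 1) (by norm_cast)).differentiable (by simp)
  have key : ∀ u : E, fderiv ℝ (fun z => fderiv ℝ f z u) y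
      = (ContinuousLinearMap.apply ℝ F u).comp (fderiv ℝ (fderiv ℝ f) y) := by
    intro u
    have h1 : (fun z => fderiv ℝ f z u)
        = (ContinuousLinearMap.apply ℝ F u) ∘ (fderiv ℝ f) := rfl
    rw [h1, fderiv_comp (x := y) ((ContinuousLinearMap.apply ℝ F u).differentiableAt) (hd2 y),
      ContinuousLinearMap.fderiv]
  rw [key, key]
  simp only [ContinuousLinearMap.coe_comp', Function.comp_apply,
    ContinuousLinearMap.apply_apply]
  exact second_derivative_symmetric (fun z => (hd1 z).hasFDerivAt) ((hd2 y).hasFDerivAt) w v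

lemma iteratedFDeriv_comp_perm :
    ∀ (n : ℕ) (f : E → F), ContDiff ℝ (n : WithTop ℕ∞) f →
      ∀ (x : E) (σ : Equiv.Perm (Fin n)) (m : Fin n → E),
        iteratedFDeriv ℝ n f x (m ∘ σ) = iteratedFDeriv ℝ n f x m := by
  intro n
  induction n with
  | zero =>
    intro f hf x σ m
    have : m ∘ σ = m := funext fun i => i.elim0
    rw [this]
  | succ n ih =>
    intro f hf x σ m
    -- Step 1: permutations fixing the last index
    have H1 : ∀ (g : E → F), ContDiff ℝ ((n+1 : ℕ) : WithTop ℕ∞) g →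
        ∀ (τ : Equiv.Perm (Fin (n+1))), τ (Fin.last n) = Fin.last n →
        ∀ (q : Fin (n+1) → E),
          iteratedFDeriv ℝ (n+1) g x (q ∘ τ) = iteratedFDeriv ℝ (n+1) g x q := by
      intro g hg τ hτ q
      have hne : ∀ i : Fin n, τ i.castSucc ≠ Fin.last n := by
        intro i h
        have h2 : i.castSucc = Fin.last n := τ.injective (h.trans hτ.symm)
        exact (Fin.castSucc_lt_last i).ne h2
      have hne' : ∀ i : Fin n, τ⁻¹ i.castSucc ≠ Fin.last n := by
        intro i h
        have h2 : i.castSucc = τ (Fin.last n) := by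
          rw [← h, Equiv.Perm.inv_def, Equiv.apply_symm_apply]
        rw [hτ] at h2
        exact (Fin.castSucc_lt_last i).ne h2
      let τ' : Equiv.Perm (Fin n) :=
        { toFun := fun i => (τ i.castSucc).castPred (hne i)
          invFun := fun i => (τ⁻¹ i.castSucc).castPred (hne' i)
          left_inv := by
            intro i
            apply Fin.castSucc_injective
            rw [Fin.castSucc_castPred, Fin.castSucc_castPred, Equiv.Perm.inv_def, Equiv.symm_apply_apply]
          right_inv := by
            intro i
            apply Fin.castSucc_injective
            rw [Fin.castSucc_castPred, Fin.castSucc_castPred, Equiv.Perm.inv_def, Equiv.apply_symm_apply] }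
      have hcomp_init : Fin.init (q ∘ τ) = (Fin.init q) ∘ τ' := by
        funext i
        show q (τ i.castSucc) = q ((τ' i).castSucc)
        have h3 : (τ' i).castSucc = τ i.castSucc := Fin.castSucc_castPred _ (hne i)
        rw [h3]
      have hlast : (q ∘ τ) (Fin.last n) = q (Fin.last n) := by
        show q (τ (Fin.last n)) = q (Fin.last n)
        rw [hτ]
      rw [iteratedFDeriv_succ_right_eval hg x (q ∘ τ),
        iteratedFDeriv_succ_right_eval hg x q, hlast, hcomp_init]
      exact ih _ (contDiff_fderiv_eval hg _) x τ' (Fin.init q)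
    rcases Nat.eq_zero_or_eq_succ_pred n with hn0 | hnk
    · -- n = 0 : permutations of Fin 1 are trivial
      subst hn0
      have : m ∘ σ = m := by
        funext i
        have h1 : σ i = i := by
          have h2 := (σ i).2
          have h3 := i.2
          exact Fin.ext (by omega)
        rw [Function.comp_apply, h1]
      rw [this]
    · -- n = k+1, so we work with Fin (k+2)
      obtain ⟨k, rfl⟩ : ∃ k, n = k + 1 := ⟨n - 1, by omega⟩
      clear hnk
      set l : Fin (k+2) := Fin.last (k+1) with hl
      set s : Fin (k+2) := (Fin.last k).castSucc with hs
      have hsl : s ≠ l := (Fin.castSucc_lt_last (Fin.last k)).ne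
      have E2 : ∀ q : Fin (k+2) → E, iteratedFDeriv ℝ (k+2) f x q
          = iteratedFDeriv ℝ k (fun y => fderiv ℝ (fun z => fderiv ℝ f z (q l)) y (q s)) x
              (Fin.init (Fin.init q)) := by
        intro q
        rw [iteratedFDeriv_succ_right_eval hf x q]
        have hg : ContDiff ℝ ((k+1+1 : ℕ) : WithTop ℕ∞) f := hf
        rw [iteratedFDeriv_succ_right_eval (contDiff_fderiv_eval hg (q l)) x (Fin.init q)]
        rfl
      have H2 : ∀ q : Fin (k+2) → E,
          iteratedFDeriv ℝ (k+2) f x (q ∘ Equiv.swap s l) = iteratedFDeriv ℝ (k+2) f x q := by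
        intro q
        rw [E2 (q ∘ Equiv.swap s l), E2 q]
        have h1 : (q ∘ Equiv.swap s l) l = q s := by
          show q (Equiv.swap s l l) = q s
          rw [Equiv.swap_apply_right]
        have h2 : (q ∘ Equiv.swap s l) s = q l := by
          show q (Equiv.swap s l s) = q l
          rw [Equiv.swap_apply_left]
        have h3 : Fin.init (Fin.init (q ∘ Equiv.swap s l)) = Fin.init (Fin.init q) := by
          funext i
          show q (Equiv.swap s l i.castSucc.castSucc) = q i.castSucc.castSucc
          rw [Equiv.swap_apply_of_ne_of_ne]
          · intro hcontra
            have h4 := Fin.castSucc_injective _ hcontra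
            exact (Fin.castSucc_lt_last i).ne h4
          · exact (Fin.castSucc_lt_last _).ne
        rw [h1, h2, h3]
        have hfun : (fun y => fderiv ℝ (fun z => fderiv ℝ f z (q s)) y (q l))
            = (fun y => fderiv ℝ (fun z => fderiv ℝ f z (q l)) y (q s)) := by
          funext y
          exact fderiv_fderiv_symm (hf.of_le (by exact_mod_cast (by omega : (2:ℕ) ≤ k+2))) y
            (q s) (q l)
        rw [hfun]
      have Hswap : ∀ (a : Fin (k+2)) (q : Fin (k+2) → E),
          iteratedFDeriv ℝ (k+2) f x (q ∘ Equiv.swap a l) = iteratedFDeriv ℝ (k+2) f x q := by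
        intro a q
        rcases eq_or_ne a l with rfl | hal
        · have : q ∘ ⇑(Equiv.swap l l) = q := by
            rw [Equiv.swap_self]
            rfl
          rw [this]
        · rcases eq_or_ne a s with rfl | has
          · exact H2 q
          · have hswapfix : Equiv.swap a s l = l :=
              Equiv.swap_apply_of_ne_of_ne (Ne.symm hal) (Ne.symm hsl)
            have hconj : Equiv.swap a l = Equiv.swap a s * Equiv.swap s l * Equiv.swap a s := by
              have h := Equiv.swap_apply_apply (Equiv.swap a s) s l
              rw [Equiv.swap_apply_right, hswapfix, Equiv.swap_inv] at h
              exact h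
            have hdecomp : q ∘ ⇑(Equiv.swap a l)
                = (((q ∘ ⇑(Equiv.swap a s)) ∘ ⇑(Equiv.swap s l)) ∘ ⇑(Equiv.swap a s)) := by
              rw [hconj]
              funext i
              simp [Equiv.Perm.mul_apply]
            have hfixa : Equiv.swap a s (Fin.last (k+1)) = Fin.last (k+1) :=
              Equiv.swap_apply_of_ne_of_ne (Ne.symm hal) (Ne.symm hsl)
            rw [hdecomp, H1 f hf (Equiv.swap a s) hfixa, H2 (q ∘ ⇑(Equiv.swap a s)),
              H1 f hf (Equiv.swap a s) hfixa]
      have hσ'last : (σ.trans (Equiv.swap (σ l) l)) l = l := by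
        rw [Equiv.trans_apply, Equiv.swap_apply_left]
      have hdec : m ∘ ⇑σ = (m ∘ ⇑(Equiv.swap (σ l) l)) ∘ ⇑(σ.trans (Equiv.swap (σ l) l)) := by
        funext i
        show m (σ i) = m (Equiv.swap (σ l) l (Equiv.swap (σ l) l (σ i)))
        rw [Equiv.swap_apply_self]
      rw [hdec, H1 f hf _ hσ'last, Hswap (σ l) m]

end Symmetry



/-! ### combinatorics of multi-indices -/

def cnt {d n : ℕ} (p : Fin n → Fin d) : Fin d → ℕ :=
  fun j => (Finset.univ.filter (fun i => p i = j)).card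

lemma cnt_sum {n : ℕ} (p : Fin n → Fin d) : ∑ j, cnt p j = n := by
  have h := Finset.card_eq_sum_card_fiberwise
    (s := (Finset.univ : Finset (Fin n))) (t := (Finset.univ : Finset (Fin d)))
    (f := p) (fun x _ => Finset.mem_univ (p x))
  simpa [cnt] using h.symm

lemma cnt_le {n : ℕ} (p : Fin n → Fin d) (j : Fin d) : cnt p j ≤ n := by
  have h := Finset.card_filter_le (Finset.univ : Finset (Fin n)) (fun i => p i = j)
  simpa [cnt] using h

lemma exists_perm_of_cnt_eq {n : ℕ} {p q : Fin n → Fin d} (h : cnt p = cnt q) :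
    ∃ σ : Equiv.Perm (Fin n), p = q ∘ σ := by
  classical
  have hcard : ∀ j, Fintype.card {i // p i = j} = Fintype.card {i // q i = j} := by
    intro j
    rw [Fintype.card_subtype, Fintype.card_subtype]
    exact congrFun h j
  let e : ∀ j, {i // p i = j} ≃ {i // q i = j} := fun j => Fintype.equivOfCardEq (hcard j)
  refine ⟨(Equiv.sigmaFiberEquiv p).symm.trans
    ((Equiv.sigmaCongrRight e).trans (Equiv.sigmaFiberEquiv q)), ?_⟩
  funext i
  exact ((e (p i)) ⟨i, rfl⟩).2.symm

/-! ### Vandermonde duals -/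

lemma vand_dual (N : ℕ) : ∃ ω : Fin N → Fin N → ℂ,
    ∀ b b' : Fin N, (∑ t, ω b t * (t : ℂ)^(b' : ℕ)) = if b' = b then 1 else 0 := by
  classical
  set W : Matrix (Fin N) (Fin N) ℂ := (Matrix.vandermonde (fun t : Fin N => (t : ℂ)))ᵀ with hW
  have hdet : IsUnit W.det := by
    rw [hW, Matrix.det_transpose, Matrix.det_vandermonde]
    rw [isUnit_iff_ne_zero]
    apply Finset.prod_ne_zero_iff.mpr
    intro i _
    apply Finset.prod_ne_zero_iff.mpr
    intro j hj
    have hij0 : i < j := Finset.mem_Ioi.mp hj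
    have hij : (i : ℕ) < (j : ℕ) := hij0
    have : ((j : ℕ) : ℂ) ≠ ((i : ℕ) : ℂ) := by
      exact_mod_cast Nat.ne_of_gt hij
    exact sub_ne_zero.mpr this
  refine ⟨fun b t => W⁻¹ t b, fun b b' => ?_⟩
  have h1 : W * W⁻¹ = 1 := Matrix.mul_nonsing_inv W hdet
  have h2 : (W * W⁻¹) b' b = (1 : Matrix (Fin N) (Fin N) ℂ) b' b := by rw [h1]
  rw [Matrix.mul_apply, Matrix.one_apply] at h2
  calc ∑ t, W⁻¹ t b * (t : ℂ)^(b' : ℕ)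
      = ∑ t, W b' t * W⁻¹ t b := by
        refine Finset.sum_congr rfl fun t _ => ?_
        have h3 : W b' t = (t : ℂ)^(b' : ℕ) := by
          rw [hW, Matrix.transpose_apply, Matrix.vandermonde_apply]
        rw [h3]
        ring
    _ = if b' = b then 1 else 0 := h2

/-! ### moments -/

def momv (β : Fin d → ℕ) : Zd d → ℂ := fun k => ∏ j, (k j : ℂ)^(β j)

def momL (β : Fin d → ℕ) : (Zd d →₀ ℂ) →ₗ[ℂ] ℂ := Finsupp.linearCombination ℂ (momv β)

lemma momL_apply_support (β : Fin d → ℕ) (w : Zd d →₀ ℂ) :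
    momL β w = ∑ k ∈ w.support, w k * momv β k := by
  rw [momL, Finsupp.linearCombination_apply, Finsupp.sum]
  rfl

lemma iteratedFDeriv_symbolS_mom (n : ℕ) (p : Fin n → Fin d) (w : Zd d →₀ ℂ) :
    iteratedFDeriv ℝ n (symbolS w) 0 (fun i => bv (p i))
      = (-Complex.I)^n * momL (cnt p) w := by
  rw [iteratedFDeriv_symbolS_basis, momL_apply_support, Finset.mul_sum]
  refine Finset.sum_congr rfl fun k _ => ?_
  have h1 : (∏ i, -(Complex.I * (k (p i) : ℂ))) = (-Complex.I)^n * ∏ i, (k (p i) : ℂ) := by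
    calc ∏ i, -(Complex.I * (k (p i) : ℂ))
        = ∏ i, ((-Complex.I) * (k (p i) : ℂ)) := by
          refine Finset.prod_congr rfl fun i _ => ?_
          ring
      _ = (∏ _i : Fin n, (-Complex.I)) * ∏ i, (k (p i) : ℂ) := Finset.prod_mul_distrib
      _ = (-Complex.I)^n * ∏ i, (k (p i) : ℂ) := by
          rw [Finset.prod_const, Finset.card_univ, Fintype.card_fin]
  have h2 : ∏ i, (k (p i) : ℂ) = momv (cnt p) k := by
    rw [momv, ← Finset.prod_fiberwise (Finset.univ) p (fun i => (k (p i) : ℂ))]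
    refine Finset.prod_congr rfl fun j _ => ?_
    rw [Finset.prod_congr rfl (fun i hi => by
      rw [(Finset.mem_filter.mp hi).2] : ∀ i ∈ Finset.univ.filter (fun i => p i = j),
        (k (p i) : ℂ) = (k j : ℂ)), Finset.prod_const]
    rfl
  rw [h1, h2]
  ring

def gridEmb {N : ℕ} (g : Fin d → Fin N) : Zd d := fun j => ((g j : ℕ) : ℤ)

def dualFilt {N : ℕ} (ω : Fin N → Fin N → ℂ) (B : Fin d → Fin N) : Zd d →₀ ℂ :=
  ∑ g : Fin d → Fin N, Finsupp.single (gridEmb g) (∏ j, ω (B j) (g j))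

lemma momL_dualFilt {N : ℕ} (ω : Fin N → Fin N → ℂ)
    (hω : ∀ b b' : Fin N, (∑ t, ω b t * (t : ℂ)^(b' : ℕ)) = if b' = b then 1 else 0)
    (B : Fin d → Fin N) (β' : Fin d → ℕ) (hβ' : ∀ j, β' j < N) :
    momL β' (dualFilt ω B) = if (fun j => ((B j : ℕ))) = β' then 1 else 0 := by
  classical
  rw [dualFilt, map_sum]
  have hterm : ∀ g : Fin d → Fin N, momL β' (Finsupp.single (gridEmb g) (∏ j, ω (B j) (g j)))
      = ∏ j, (ω (B j) (g j) * ((g j : ℕ) : ℂ)^(β' j)) := by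
    intro g
    rw [momL, Finsupp.linearCombination_single, smul_eq_mul, momv, ← Finset.prod_mul_distrib]
    refine Finset.prod_congr rfl fun j _ => ?_
    have hcast : ((gridEmb g j : ℤ) : ℂ) = ((g j : ℕ) : ℂ) := by
      simp [gridEmb]
    rw [hcast]
  rw [Finset.sum_congr rfl (fun g _ => hterm g)]
  have hps : ∑ g : Fin d → Fin N, ∏ j, (ω (B j) (g j) * ((g j : ℕ) : ℂ)^(β' j))
      = ∏ j, ∑ t : Fin N, (ω (B j) t * ((t : ℕ) : ℂ)^(β' j)) := by
    rw [Finset.prod_univ_sum]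
    rw [← Fintype.piFinset_univ]
  rw [hps]
  rcases eq_or_ne (fun j => ((B j : ℕ))) β' with heq | hne
  · rw [if_pos heq]
    apply Finset.prod_eq_one
    intro j _
    have hj : β' j = ((B j : ℕ)) := (congrFun heq j).symm
    have := hω (B j) ⟨β' j, hβ' j⟩
    rw [if_pos (by exact Fin.ext hj)] at this
    simpa using this
  · rw [if_neg hne]
    obtain ⟨j, hj⟩ := Function.ne_iff.mp hne
    apply Finset.prod_eq_zero (Finset.mem_univ j)
    have := hω (B j) ⟨β' j, hβ' j⟩
    rw [if_neg (by
      intro hcontra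
      exact hj (by
        have := congrArg Fin.val hcontra
        simpa using this.symm))] at this
    simpa using this



/-! ### the interpolation theorem -/

theorem interp {N : ℕ} (F : Rd d → ℂ) (hF : ContDiff ℝ (N : WithTop ℕ∞) F) :
    ∃ w : Zd d →₀ ℂ, ∀ n : ℕ, n < N →
      iteratedFDeriv ℝ n (symbolS w) 0 = iteratedFDeriv ℝ n F 0 := by
  classical
  obtain ⟨ω, hω⟩ := vand_dual N
  set t : ∀ n : ℕ, (Fin n → Fin d) → ℂ :=
    fun n p => iteratedFDeriv ℝ n F 0 (fun i => bv (p i)) with ht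
  have tsym : ∀ (n n' : ℕ) (h : n' = n) (p : Fin n → Fin d) (p' : Fin n' → Fin d),
      n ≤ N → cnt p' = cnt p → t n' p' = t n p := by
    intro n n' h
    subst h
    intro p p' hn hcnt
    obtain ⟨σ, hσ⟩ := exists_perm_of_cnt_eq hcnt
    show iteratedFDeriv ℝ n' F 0 (fun i => bv (p' i)) = iteratedFDeriv ℝ n' F 0 (fun i => bv (p i))
    have h2 : (fun i => bv (p' i)) = (fun i => bv (p i)) ∘ σ := by
      funext i
      rw [hσ]
      rfl
    rw [h2]
    exact iteratedFDeriv_comp_perm n' F (hF.of_le (by exact_mod_cast hn)) 0 σ _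
  set c : (Fin d → Fin N) → ℂ := fun B =>
    if h : ∃ q : Fin (∑ j, ((B j : ℕ))) → Fin d, cnt q = fun j => ((B j : ℕ)) then
      ((-Complex.I)^(∑ j, ((B j : ℕ))))⁻¹ * t _ h.choose
    else 0 with hc
  refine ⟨∑ B : Fin d → Fin N, c B • dualFilt ω B, ?_⟩
  intro n hn
  apply ContinuousMultilinearMap.toMultilinearMap_injective
  apply Module.Basis.ext_multilinear (fun _ => Pi.basisFun ℝ (Fin d))
  intro p
  have hbasis : (fun i => (Pi.basisFun ℝ (Fin d)) (p i)) = fun i => bv (p i) := by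
    funext i
    rw [Pi.basisFun_apply]
    rfl
  show iteratedFDeriv ℝ n (symbolS _) 0 (fun i => (Pi.basisFun ℝ (Fin d)) (p i))
      = iteratedFDeriv ℝ n F 0 (fun i => (Pi.basisFun ℝ (Fin d)) (p i))
  rw [hbasis, iteratedFDeriv_symbolS_mom]
  have hβ' : ∀ j, cnt p j < N := fun j => lt_of_le_of_lt (cnt_le p j) hn
  set B₀ : Fin d → Fin N := fun j => ⟨cnt p j, hβ' j⟩ with hB₀
  have hmom : momL (cnt p) (∑ B : Fin d → Fin N, c B • dualFilt ω B) = c B₀ := by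
    rw [map_sum]
    rw [Finset.sum_eq_single B₀]
    · rw [_root_.map_smul, momL_dualFilt ω hω B₀ (cnt p) hβ', if_pos (by funext j; rfl)]
      rw [smul_eq_mul, mul_one]
    · intro B _ hB
      rw [_root_.map_smul, momL_dualFilt ω hω B (cnt p) hβ']
      rw [if_neg, smul_eq_mul, mul_zero]
      intro hcontra
      apply hB
      funext j
      exact Fin.ext (congrFun hcontra j)
    · intro h
      exact absurd (Finset.mem_univ B₀) h
  rw [hmom]
  have hn₀ : (∑ j, ((B₀ j : ℕ))) = n := by
    rw [hB₀]
    exact cnt_sum p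
  have hex : ∃ q : Fin (∑ j, ((B₀ j : ℕ))) → Fin d, cnt q = fun j => ((B₀ j : ℕ)) := by
    refine ⟨p ∘ Fin.cast hn₀, ?_⟩
    have hcc : cnt (p ∘ Fin.cast hn₀) = cnt p := by
      have h5 : ∀ (n' : ℕ) (h : n' = n), cnt (p ∘ Fin.cast h) = cnt p := by
        intro n' h
        subst h
        rfl
      exact h5 _ hn₀
    rw [hcc]
  have hcB : c B₀ = ((-Complex.I)^(∑ j, ((B₀ j : ℕ))))⁻¹ * t _ hex.choose := by
    rw [hc]
    exact dif_pos hex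
  rw [hcB]
  have hts : t _ hex.choose = t n p := by
    refine tsym n _ hn₀ p hex.choose hn.le ?_
    rw [hex.choose_spec]
  rw [hts]
  have hpow : ((∑ j, ((B₀ j : ℕ)))) = n := hn₀
  rw [hpow]
  have hI : (-Complex.I)^n ≠ 0 := pow_ne_zero n (neg_ne_zero.mpr Complex.I_ne_zero)
  rw [mul_inv_cancel_left₀ hI]



/-! ### germ version of interpolation -/

theorem interp_vanish {N : ℕ} {F : Rd d → ℂ} (hF : ContDiffAt ℝ (N : WithTop ℕ∞) F 0) :
    ∃ w : Zd d →₀ ℂ, vanishesTo N (fun ξ => symbolS w ξ - F ξ) := by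
  obtain ⟨G, hG, hGF⟩ := exists_contDiff_eventuallyEq hF
  obtain ⟨w, hw⟩ := interp G hG
  refine ⟨w, ?_⟩
  have h1 : vanishesTo N (fun ξ => symbolS w ξ - G ξ) := by
    intro j hj
    have hjN : (j : WithTop ℕ∞) ≤ (N : WithTop ℕ∞) := by exact_mod_cast hj.le
    have heq : (fun ξ => symbolS w ξ - G ξ) = symbolS w + (fun ξ => -(G ξ)) := by
      funext ξ
      simp [sub_eq_add_neg]
    rw [heq, iteratedFDeriv_add_apply ((contDiff_symbolS _ w).of_le le_rfl).contDiffAt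
      ((hG.of_le hjN).neg).contDiffAt]
    have heq2 : (fun ξ => -(G ξ)) = -G := rfl
    rw [heq2, iteratedFDeriv_neg_apply, hw j hj, add_neg_cancel]
  refine vanishesTo_congr ?_ h1
  filter_upwards [hGF] with ξ h
  rw [h]

/-! ### filter algebra: convolution and row filters -/

def symbolHomS (ξ : Rd d) : (Zd d →₀ ℂ) →+ ℂ :=
  Finsupp.liftAddHom (fun k => DistribMulAction.toAddMonoidHom ℂ (expk k ξ))

lemma symbolS_eq_hom (w : Zd d →₀ ℂ) (ξ : Rd d) : symbolS w ξ = symbolHomS ξ w := rfl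

def convS (a b : Zd d →₀ ℂ) : Zd d →₀ ℂ :=
  a.sum fun j c => b.sum fun k c' => Finsupp.single (j + k) (c * c')

lemma symbolS_convS (a b : Zd d →₀ ℂ) (ξ : Rd d) :
    symbolS (convS a b) ξ = symbolS a ξ * symbolS b ξ := by
  classical
  rw [symbolS_eq_hom, convS, map_finsuppSum]
  have h1 : ∀ j c, symbolHomS ξ (b.sum fun k c' => Finsupp.single (j+k) (c * c'))
      = ∑ k ∈ b.support, expk (j+k) ξ * (c * b k) := by
    intro j c
    rw [map_finsuppSum, Finsupp.sum]
    refine Finset.sum_congr rfl fun k _ => ?_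
    rw [symbolHomS, Finsupp.liftAddHom_apply_single]
    rfl
  have h2 : (a.sum fun j c => symbolHomS ξ (b.sum fun k c' => Finsupp.single (j+k) (c * c')))
      = ∑ j ∈ a.support, ∑ k ∈ b.support, expk (j+k) ξ * (a j * b k) := by
    refine Finset.sum_congr rfl fun j _ => h1 j (a j)
  rw [h2, symbolS_eq_sum, symbolS_eq_sum, Finset.sum_mul_sum]
  refine Finset.sum_congr rfl fun j _ => Finset.sum_congr rfl fun k _ => ?_
  rw [expk_add]
  ring

def rowFilt {r : ℕ} (y : Fin r → (Zd d →₀ ℂ)) : Zd d →₀ Matrix (Fin 1) (Fin r) ℂ :=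
  ∑ i, (y i).sum fun k c => Finsupp.single k (Matrix.single (0 : Fin 1) i c)

def symbolHomM {r : ℕ} (ξ : Rd d) :
    (Zd d →₀ Matrix (Fin 1) (Fin r) ℂ) →+ Matrix (Fin 1) (Fin r) ℂ :=
  Finsupp.liftAddHom (fun k => DistribMulAction.toAddMonoidHom _ (expk k ξ))

lemma symbol_eq_hom {r : ℕ} (V : Zd d →₀ Matrix (Fin 1) (Fin r) ℂ) (ξ : Rd d) :
    symbol V ξ = symbolHomM ξ V := rfl

lemma symbol_rowFilt {r : ℕ} (y : Fin r → (Zd d →₀ ℂ)) (ξ : Rd d) (i : Fin r) :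
    symbol (rowFilt y) ξ 0 i = symbolS (y i) ξ := by
  classical
  rw [symbol_eq_hom, rowFilt, map_sum, Matrix.sum_apply]
  have hterm : ∀ i' : Fin r,
      (symbolHomM ξ ((y i').sum fun k c =>
        Finsupp.single k (Matrix.single (0:Fin 1) i' c))) 0 i
      = if i' = i then symbolS (y i') ξ else 0 := by
    intro i'
    rw [map_finsuppSum]
    have h3 : ((y i').sum fun k c => symbolHomM ξ
        (Finsupp.single k (Matrix.single (0:Fin 1) i' c))) 0 i
        = ∑ k ∈ (y i').support, expk k ξ * (Matrix.single (0:Fin 1) i' (y i' k) 0 i) := by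
      rw [Finsupp.sum, Matrix.sum_apply]
      refine Finset.sum_congr rfl fun k _ => ?_
      rw [symbolHomM, Finsupp.liftAddHom_apply_single]
      rfl
    rw [h3]
    rcases eq_or_ne i' i with rfl | hne
    · rw [if_pos rfl, symbolS_eq_sum]
      refine Finset.sum_congr rfl fun k _ => ?_
      rw [Matrix.single_apply_same]
    · rw [if_neg hne]
      apply Finset.sum_eq_zero
      intro k _
      rw [Matrix.single_apply_of_ne]
      · ring
      · intro hcontra
        exact hne hcontra.2
  rw [Finset.sum_congr rfl (fun i' _ => hterm i'), Finset.sum_ite_eq' Finset.univ i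
    (fun i' => symbolS (y i') ξ)]
  rw [if_pos (Finset.mem_univ i)]

end Aux6

open Aux6

/-- if `v̂(ξ)û(ξ) = 1 + O(‖ξ‖^m)`, then there is a row vector `mrv` of
trigonometric polynomials with `mrv = v + O(‖ξ‖^m)` and `mrv(ξ)û(ξ) = 1 + O(‖ξ‖^n)`. -/
theorem stmt6 {d r : ℕ} (m n : ℕ) (hm : 0 < m) (hn : 0 < n)
    (v : Rd d → Matrix (Fin 1) (Fin r) ℂ) (u : Rd d → Matrix (Fin r) (Fin 1) ℂ)
    (hv : ∀ i, ContDiffAt ℝ (⊤ : ℕ∞) (fun ξ => v ξ 0 i) 0)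
    (hu : ∀ i, ContDiffAt ℝ (⊤ : ℕ∞) (fun ξ => u ξ i 0) 0)
    (hvu : vanishesTo m (fun ξ => (v ξ * u ξ) 0 0 - 1)) :
    ∃ mrv : Zd d →₀ Matrix (Fin 1) (Fin r) ℂ,
      (∀ i, vanishesTo m (fun ξ => symbol mrv ξ 0 i - v ξ 0 i)) ∧
      vanishesTo n (fun ξ => (symbol mrv ξ * u ξ) 0 0 - 1) := by
  classical
  set N := max m n with hN
  have hmN : m ≤ N := le_max_left m n
  have hnN : n ≤ N := le_max_right m n
  have triv0 : ∀ f : Rd d → ℂ, vanishesTo 0 f := fun f j hj => absurd hj (Nat.not_lt_zero j)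
  -- globally smooth representatives of the entries of v and u
  choose V hVc hVe using fun i : Fin r =>
    exists_contDiff_eventuallyEq (K := N) ((hv i).of_le (by exact_mod_cast le_top))
  choose U hUc hUe using fun i : Fin r =>
    exists_contDiff_eventuallyEq (K := N) ((hu i).of_le (by exact_mod_cast le_top))
  -- trigonometric approximations of the V i
  choose w hw using fun i : Fin r => interp_vanish (N := N) (hVc i).contDiffAt
  set G : Rd d → ℂ := fun ξ => ∑ i, symbolS (w i) ξ * U i ξ with hG
  have hGc : ContDiff ℝ (N : WithTop ℕ∞) G :=
    ContDiff.sum fun i _ => (contDiff_symbolS _ (w i)).mul (hUc i)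
  have hsum1 : vanishesTo N (fun ξ => ∑ i, (symbolS (w i) ξ - V i ξ) * U i ξ) := by
    refine vanishesTo_sum (K := N) Finset.univ _ le_rfl
      (fun i _ => ((contDiff_symbolS _ (w i)).sub (hVc i)).mul (hUc i)) (fun i _ => ?_)
    have := vanishesTo_mul (m1 := N) (m2 := 0) (K := N) (by omega)
      ((contDiff_symbolS _ (w i)).sub (hVc i)) (hUc i) (hw i) (triv0 _)
    simpa using this
  have hvu2 : vanishesTo m (fun ξ => (∑ i, V i ξ * U i ξ) - 1) := by
    refine vanishesTo_congr ?_ hvu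
    have hall : ∀ᶠ ξ in nhds (0:Rd d), ∀ i, V i ξ = v ξ 0 i ∧ U i ξ = u ξ i 0 := by
      rw [Filter.eventually_all]
      intro i
      filter_upwards [hVe i, hUe i] with ξ h1 h2
      exact ⟨h1, h2⟩
    filter_upwards [hall] with ξ hξ
    rw [Matrix.mul_apply]
    congr 1
    refine Finset.sum_congr rfl fun i _ => ?_
    rw [(hξ i).1, (hξ i).2]
  have hA : vanishesTo m (fun ξ => G ξ - 1) := by
    have h1 := vanishesTo_add (m := m) (K := N) hmN
      (ContDiff.sum fun i _ => ((contDiff_symbolS _ (w i)).sub (hVc i)).mul (hUc i))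
      ((ContDiff.sum fun (i : Fin r) (_ : i ∈ Finset.univ) => (hVc i).mul (hUc i)).sub
        contDiff_const)
      (vanishesTo_mono hmN hsum1) hvu2
    refine vanishesTo_congr ?_ h1
    filter_upwards with ξ
    have h2 : ∑ i, (symbolS (w i) ξ - V i ξ) * U i ξ
        = (∑ i, symbolS (w i) ξ * U i ξ) - ∑ i, V i ξ * U i ξ := by
      rw [← Finset.sum_sub_distrib]
      refine Finset.sum_congr rfl fun i _ => ?_
      ring
    rw [h2]
    ring
  have hG0 : G 0 = 1 := by
    have h0 := hA 0 hm
    have h1 : (fun ξ => G ξ - 1) 0 = iteratedFDeriv ℝ 0 (fun ξ => G ξ - 1) 0 (fun _ => 0) :=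
      (iteratedFDeriv_zero_apply (𝕜 := ℝ) (f := fun ξ => G ξ - 1) (x := 0) _).symm
    rw [h0] at h1
    simp only [ContinuousMultilinearMap.zero_apply] at h1
    have h2 : G 0 - 1 = 0 := h1
    linear_combination h2
  have hGinvAt : ContDiffAt ℝ (N : WithTop ℕ∞) (fun ξ => (G ξ)⁻¹) 0 :=
    hGc.contDiffAt.inv (by rw [hG0]; exact one_ne_zero)
  obtain ⟨Gi, hGic, hGie⟩ := exists_contDiff_eventuallyEq hGinvAt
  obtain ⟨h, hh⟩ := interp_vanish (N := N) hGic.contDiffAt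
  have hGne : ∀ᶠ ξ in nhds (0:Rd d), G ξ ≠ 0 :=
    (hGc.continuous.continuousAt).eventually_ne (by rw [hG0]; exact one_ne_zero)
  have h1G : vanishesTo m (fun ξ => 1 - G ξ) := by
    refine vanishesTo_congr ?_ (vanishesTo_neg hA)
    filter_upwards with ξ
    ring
  have hGi1 : vanishesTo m (fun ξ => Gi ξ - 1) := by
    have hphi := vanishesTo_mul (m1 := m) (m2 := 0) (K := N) (by omega)
      (contDiff_const.sub hGc) hGic h1G (triv0 _)
    refine vanishesTo_congr ?_ (by simpa using hphi)
    filter_upwards [hGne, hGie] with ξ h1 h2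
    rw [h2]
    field_simp
  have hs1 : vanishesTo m (fun ξ => symbolS h ξ - 1) := by
    have h1 := vanishesTo_add (m := m) (K := N) hmN
      ((contDiff_symbolS _ h).sub hGic) (hGic.sub contDiff_const)
      (vanishesTo_mono hmN hh) hGi1
    refine vanishesTo_congr ?_ h1
    filter_upwards with ξ
    ring
  refine ⟨rowFilt (fun i => convS h (w i)), ?_, ?_⟩
  · intro i
    have hkey : vanishesTo m
        (fun ξ => (symbolS h ξ - 1) * symbolS (w i) ξ + (symbolS (w i) ξ - V i ξ)) := by
      refine vanishesTo_add (K := N) hmN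
        (((contDiff_symbolS _ h).sub contDiff_const).mul (contDiff_symbolS _ (w i)))
        ((contDiff_symbolS _ (w i)).sub (hVc i)) ?_ (vanishesTo_mono hmN (hw i))
      have := vanishesTo_mul (m1 := m) (m2 := 0) (K := N) (by omega)
        ((contDiff_symbolS _ h).sub contDiff_const) (contDiff_symbolS _ (w i)) hs1 (triv0 _)
      simpa using this
    refine vanishesTo_congr ?_ hkey
    filter_upwards [hVe i] with ξ h1
    rw [symbol_rowFilt, symbolS_convS, ← h1]
    ring
  · have hkey : vanishesTo n (fun ξ => (symbolS h ξ - Gi ξ) * G ξ) := by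
      have h1 := vanishesTo_mul (m1 := N) (m2 := 0) (K := N) (by omega)
        ((contDiff_symbolS _ h).sub hGic) hGc hh (triv0 _)
      exact vanishesTo_mono (by omega : n ≤ N + 0) h1
    refine vanishesTo_congr ?_ hkey
    have hallU : ∀ᶠ ξ in nhds (0:Rd d), ∀ i : Fin r, U i ξ = u ξ i 0 := by
      rw [Filter.eventually_all]
      exact fun i => hUe i
    filter_upwards [hGne, hGie, hallU] with ξ h1 h2 h3
    rw [Matrix.mul_apply]
    have h4 : ∀ i : Fin r, symbol (rowFilt (fun i => convS h (w i))) ξ 0 i * u ξ i 0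
        = symbolS h ξ * (symbolS (w i) ξ * U i ξ) := by
      intro i
      rw [symbol_rowFilt, symbolS_convS, h3 i]
      ring
    rw [Finset.sum_congr rfl (fun i _ => h4 i), ← Finset.mul_sum]
    have h5 : (∑ i, symbolS (w i) ξ * U i ξ) = G ξ := rfl
    rw [h5, h2]
    field_simp

end
end
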